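/- arXiv:math/0410459 — 6 statements merged into one kernel-verified Lean document; each statement's English description precedes it below -/
import Mathlib

section
/- Let μ be a probability measure on ℝ whose support is contained in an interval (a, ∞) or (-∞, a) for some real a, and suppose that for some even or odd integer p ≥ 1 and real numbers r_0, ..., r_{p+1}, the Cauchy transform satisfies G_μ(1/z) = Σ_{i=0}^{p+1} r_i z^i + o(z^{p+1}) as z → 0 nontangentially in the upper half-plane region {z = x+iy : |x| < -αy}. Then μ has a finite p-th moment, and m_l(μ) = r_{l+1} for all l = 0, ..., p. -/
open MeasureTheory Complex Filter Set

/-- The truncated cone `Δ_{α,β} = {z = x+iy : |x| < -αy, |z| < β}`. -/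
def Delta (α β : ℝ) : Set ℂ :=
  {z : ℂ | |z.re| < -α * z.im ∧ ‖z‖ < β}

/-- The Cauchy transform `G_μ(z) = ∫ dμ(t)/(z-t)`. -/
noncomputable def cauchyTransform (μ : Measure ℝ) (z : ℂ) : ℂ :=
  ∫ t : ℝ, (z - (t : ℝ)) ⁻¹ ∂μ



lemma Iy_sub_ne (y t : ℝ) (hy : 0 < y) : I * (y:ℂ) - (t:ℂ) ≠ 0 := by
  intro h
  have : (I * (y:ℂ) - (t:ℂ)).im = y := by simp
  rw [h] at this; simp at this; exact hy.ne this

lemma cont_integrand (y : ℝ) (hy : 0 < y) (k : ℕ) :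
    Continuous (fun t : ℝ => (I * (y:ℂ)) * (t:ℂ)^k / (I * (y:ℂ) - (t:ℂ))) := by
  apply Continuous.div
  · exact continuous_const.mul (Complex.continuous_ofReal.pow k)
  · exact continuous_const.sub Complex.continuous_ofReal
  · exact fun t => Iy_sub_ne y t hy

-- geometric expansion, pointwise
lemma geom_expand (w : ℂ) (t : ℂ) (hw : w ≠ 0) (hwt : w - t ≠ 0) (k : ℕ) :
    (w - t)⁻¹ = (∑ j ∈ Finset.range k, t^j * (w⁻¹)^(j+1)) + t^k * (w⁻¹)^k * (w - t)⁻¹ := by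
  induction k with
  | zero => simp
  | succ n ih =>
    have key : t^n * (w⁻¹)^n * (w-t)⁻¹
        = t^n * (w⁻¹)^(n+1) + t^(n+1) * (w⁻¹)^(n+1) * (w-t)⁻¹ := by
      linear_combination (-(t^n * (w⁻¹)^n * (w-t)⁻¹)) * mul_inv_cancel₀ hw + (t^n * (w⁻¹)^(n+1)) * mul_inv_cancel₀ hwt
    rw [Finset.sum_range_succ, add_assoc]
    conv_lhs => rw [ih]
    exact congrArg (_ + ·) key

lemma Iy_ne (y : ℝ) (hy : 0 < y) : I * (y:ℂ) ≠ 0 :=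
  mul_ne_zero I_ne_zero (by exact_mod_cast hy.ne')

lemma int_abs_pow_le (μ : Measure ℝ) [IsProbabilityMeasure μ] (m : ℕ)
    (hInt : Integrable (fun t : ℝ => |t| ^ m) μ) {j : ℕ} (hj : j ≤ m) :
    Integrable (fun t : ℝ => |t| ^ j) μ := by
  apply ((integrable_const (1:ℝ)).add hInt).mono
    (((_root_.continuous_abs.pow j).aestronglyMeasurable))
  filter_upwards with t
  simp only [Pi.add_apply, Pi.pow_apply, Real.norm_eq_abs]
  rw [_root_.abs_of_nonneg (by positivity : (0:ℝ) ≤ |t|^j),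
    _root_.abs_of_nonneg (by positivity : (0:ℝ) ≤ 1 + |t|^m)]
  rcases le_or_gt (|t|) 1 with h | h
  · nlinarith [pow_le_one₀ (abs_nonneg t) h (n := j), pow_nonneg (abs_nonneg t) m]
  · nlinarith [pow_le_pow_right₀ h.le hj]

lemma int_pow (μ : Measure ℝ) [IsProbabilityMeasure μ] (m : ℕ)
    (hInt : Integrable (fun t : ℝ => |t| ^ m) μ) {j : ℕ} (hj : j ≤ m) :
    Integrable (fun t : ℝ => t ^ j) μ := by
  apply (int_abs_pow_le μ m hInt hj).mono ((continuous_pow j).aestronglyMeasurable)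
  filter_upwards with t
  rw [Real.norm_eq_abs, Real.norm_eq_abs, _root_.abs_pow, _root_.abs_pow, _root_.abs_abs]

lemma y_le_norm (y t : ℝ) : y ≤ ‖I * (y:ℂ) - (t:ℂ)‖ := by
  have h := Complex.abs_im_le_norm (I * (y:ℂ) - (t:ℂ))
  simp only [Complex.sub_im, Complex.mul_im, Complex.I_re, Complex.I_im, Complex.ofReal_re,
    Complex.ofReal_im] at h
  calc y ≤ |y| := le_abs_self y
  _ ≤ _ := by convert h using 2; ring

-- norm of integrand
lemma norm_integrand (y t : ℝ) (hy : 0 < y) (k : ℕ) :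
    ‖(I * (y:ℂ)) * (t:ℂ)^k / (I * (y:ℂ) - (t:ℂ))‖ ≤ |t|^k := by
  have hne : I * (y:ℂ) - (t:ℂ) ≠ 0 := Iy_sub_ne y t hy
  rw [norm_div, norm_mul]
  have h1 : ‖I * (y:ℂ)‖ = y := by simp [abs_of_pos hy]
  have h2 : ‖(t:ℂ)^k‖ = |t|^k := by simp [Complex.norm_real]
  rw [h1, h2]
  rw [div_le_iff₀ (lt_of_lt_of_le hy (y_le_norm y t))]
  calc y * |t|^k = |t|^k * y := by ring
  _ ≤ |t|^k * ‖I * (y:ℂ) - (t:ℂ)‖ := by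
      exact mul_le_mul_of_nonneg_left (y_le_norm y t) (by positivity)
  _ = _ := by ring

lemma t_le_norm (y t : ℝ) : |t| ≤ ‖I * (y:ℂ) - (t:ℂ)‖ := by
  have h := Complex.abs_re_le_norm (I * (y:ℂ) - (t:ℂ))
  simp only [Complex.sub_re, Complex.mul_re, Complex.I_re, Complex.I_im, Complex.ofReal_re,
    Complex.ofReal_im] at h
  calc |t| = |(0:ℝ) * y - 1 * 0 - t| := by ring_nf; simp [abs_neg]
  _ ≤ _ := h

lemma norm_integrand' (y t : ℝ) (hy : 0 < y) (k : ℕ) :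
    ‖(I * (y:ℂ)) * (t:ℂ)^k / (I * (y:ℂ) - (t:ℂ))‖ ≤ max 1 y * |t|^(k-1) := by
  rw [norm_div, norm_mul]
  have h1 : ‖I * (y:ℂ)‖ = y := by simp [abs_of_pos hy]
  have h2 : ‖(t:ℂ)^k‖ = |t|^k := by simp [Complex.norm_real]
  rw [h1, h2]
  rcases Nat.eq_zero_or_pos k with hk | hk
  · subst hk
    simp only [pow_zero, mul_one, Nat.zero_sub, pow_zero, mul_one]
    rw [div_le_iff₀ (lt_of_lt_of_le hy (y_le_norm y t))]
    calc y ≤ ‖I * (y:ℂ) - (t:ℂ)‖ := y_le_norm y t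
    _ ≤ max 1 y * ‖I * (y:ℂ) - (t:ℂ)‖ := by
        nlinarith [le_max_left (1:ℝ) y, lt_of_lt_of_le hy (y_le_norm y t)]
  · rw [div_le_iff₀ (lt_of_lt_of_le hy (y_le_norm y t))]
    have hkk : |t|^k = |t|^(k-1) * |t| := by
      rw [← pow_succ]; congr 1; omega
    calc y * |t|^k = y * |t|^(k-1) * |t| := by rw [hkk]; ring
    _ ≤ max 1 y * |t|^(k-1) * ‖I * (y:ℂ) - (t:ℂ)‖ := by
        apply mul_le_mul _ (t_le_norm y t) (abs_nonneg t) (by positivity)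
        exact mul_le_mul_of_nonneg_right (le_max_right 1 y) (by positivity)

lemma int_c (μ : Measure ℝ) [IsProbabilityMeasure μ] (k : ℕ)
    (hInt : Integrable (fun t : ℝ => |t| ^ (k - 1)) μ) (y : ℝ) (hy : 0 < y) :
    Integrable (fun t : ℝ => (I * (y:ℂ)) * (t:ℂ)^k / (I * (y:ℂ) - (t:ℂ))) μ := by
  apply (hInt.const_mul (max 1 y)).mono (cont_integrand y hy k).aestronglyMeasurable
  filter_upwards with t
  have : ‖max 1 y * |t| ^ (k-1)‖ = max 1 y * |t| ^ (k-1) := by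
    rw [Real.norm_eq_abs, _root_.abs_of_nonneg]
    positivity
  rw [this]
  exact norm_integrand' y t hy k

lemma coe_pow_int (j : ℕ) : (fun t : ℝ => ((t:ℂ))^j) = fun t : ℝ => ((t^j : ℝ) : ℂ) := by
  funext t; push_cast; rfl

lemma key_eq (μ : Measure ℝ) [IsProbabilityMeasure μ] (k : ℕ) (r : ℕ → ℝ) (hr0 : r 0 = 0)
    (hmom : ∀ j, j < k → ∫ t, t ^ j ∂μ = r (j + 1))
    (hInt : Integrable (fun t : ℝ => |t| ^ (k - 1)) μ)
    (y : ℝ) (hy : 0 < y) :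
    (I * (y:ℂ))^(k+1) * (cauchyTransform μ (I * (y:ℂ))
        - ∑ i ∈ Finset.range (k+1), (r i : ℂ) * ((I * (y:ℂ))⁻¹)^i)
      = ∫ t, (I * (y:ℂ)) * (t:ℂ)^k / (I * (y:ℂ) - (t:ℂ)) ∂μ := by
  set w := I * (y:ℂ) with hw
  have hwne : w ≠ 0 := Iy_ne y hy
  have hsum : (∑ i ∈ Finset.range (k+1), (r i : ℂ) * (w⁻¹)^i)
      = ∑ j ∈ Finset.range k, ((∫ t, t ^ j ∂μ : ℝ) : ℂ) * (w⁻¹)^(j+1) := by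
    rw [Finset.sum_range_succ']
    simp only [hr0, Complex.ofReal_zero, zero_mul, pow_zero, mul_one, add_zero]
    apply Finset.sum_congr rfl
    intro j hj
    rw [hmom j (Finset.mem_range.mp hj)]
  have hint1 : ∀ j ∈ Finset.range k, Integrable (fun t : ℝ => ((t:ℂ))^j * (w⁻¹)^(j+1)) μ := by
    intro j hj
    have hj' : j ≤ k - 1 := by have := Finset.mem_range.mp hj; omega
    have h1 : Integrable (fun t : ℝ => ((t^j : ℝ) : ℂ)) μ :=
      (int_pow μ (k-1) hInt hj').ofReal
    rw [← coe_pow_int] at h1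
    exact h1.mul_const _
  have hint2 : Integrable (fun t : ℝ => (w⁻¹)^(k+1) * (w * (t:ℂ)^k / (w - (t:ℂ)))) μ :=
    (int_c μ k hInt y hy).const_mul _
  have hpt : ∀ t : ℝ, (w - (t:ℂ))⁻¹ = (∑ j ∈ Finset.range k, ((t:ℂ))^j * (w⁻¹)^(j+1))
      + (w⁻¹)^(k+1) * (w * (t:ℂ)^k / (w - (t:ℂ))) := by
    intro t
    rw [geom_expand w t hwne (Iy_sub_ne y t hy) k]
    congr 1
    have h1 : (w⁻¹)^(k+1) * w = (w⁻¹)^k := by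
      rw [pow_succ, mul_assoc, inv_mul_cancel₀ hwne, mul_one]
    calc (t:ℂ)^k * (w⁻¹)^k * (w - (t:ℂ))⁻¹ = ((w⁻¹)^(k+1) * w) * ((t:ℂ)^k * (w - (t:ℂ))⁻¹) := by
          rw [h1]; ring
    _ = (w⁻¹)^(k+1) * (w * (t:ℂ)^k / (w - (t:ℂ))) := by rw [div_eq_mul_inv]; ring
  have hG : cauchyTransform μ w = (∑ j ∈ Finset.range k, ((∫ t, t ^ j ∂μ : ℝ):ℂ) * (w⁻¹)^(j+1))
      + (w⁻¹)^(k+1) * ∫ t, w * (t:ℂ)^k / (w - (t:ℂ)) ∂μ := by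
    unfold cauchyTransform
    rw [integral_congr_ae (ae_of_all _ hpt)]
    rw [integral_add (integrable_finset_sum _ hint1) hint2]
    rw [integral_finset_sum _ hint1, integral_const_mul]
    congr 1
    apply Finset.sum_congr rfl
    intro j hj
    rw [integral_mul_const, coe_pow_int j]
    congr 1
    exact integral_ofReal
  rw [hG, hsum]
  have hone : w^(k+1) * (w⁻¹)^(k+1) = 1 := by
    rw [← mul_pow, mul_inv_cancel₀ hwne, one_pow]
  set S := ∑ j ∈ Finset.range k, ((∫ t, t ^ j ∂μ : ℝ):ℂ) * (w⁻¹)^(j+1)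
  set J := ∫ t, w * (t:ℂ)^k / (w - (t:ℂ)) ∂μ
  calc w^(k+1) * (S + (w⁻¹)^(k+1) * J - S) = (w^(k+1) * (w⁻¹)^(k+1)) * J := by ring
  _ = J := by rw [hone, one_mul]

lemma inv_Iy_eq (y : ℝ) (hy : 0 < y) : (I * (y:ℂ))⁻¹ = -I * ((y⁻¹ : ℝ):ℂ) := by
  have hy' : (y:ℂ) ≠ 0 := by exact_mod_cast hy.ne'
  apply inv_eq_of_mul_eq_one_left
  push_cast
  linear_combination (-((y:ℂ)⁻¹ * (y:ℂ))) * Complex.I_mul_I + inv_mul_cancel₀ hy'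

lemma tendsto_inv_Iy : Tendsto (fun y : ℝ => (I * (y:ℂ))⁻¹) atTop (nhds 0) := by
  apply squeeze_zero_norm' (a := fun y : ℝ => y⁻¹)
  · filter_upwards [eventually_gt_atTop (0:ℝ)] with y hy
    rw [norm_inv, norm_mul, Complex.norm_I, one_mul, Complex.norm_real, Real.norm_eq_abs,
      abs_of_pos hy]
  · exact tendsto_inv_atTop_zero

lemma tendsto_path (β : ℝ) (hβ : 0 < β) :
    Tendsto (fun y : ℝ => (I * (y:ℂ))⁻¹) atTop (nhdsWithin 0 (Delta 1 β)) := by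
  rw [tendsto_nhdsWithin_iff]
  refine ⟨tendsto_inv_Iy, ?_⟩
  filter_upwards [eventually_gt_atTop (0:ℝ), eventually_gt_atTop β⁻¹] with y hy hyβ
  rw [inv_Iy_eq y hy]
  constructor
  · have hre : ((-I) * ((y⁻¹:ℝ):ℂ)).re = 0 := by simp
    have him : ((-I) * ((y⁻¹:ℝ):ℂ)).im = -y⁻¹ := by simp
    rw [hre, him]
    simp [inv_pos.mpr hy]
  · have : ‖(-I) * ((y⁻¹:ℝ):ℂ)‖ = y⁻¹ := by
      simp [abs_of_pos (inv_pos.mpr hy), hy.le]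
    rw [this]
    exact (inv_lt_comm₀ hy hβ).mpr hyβ

lemma algebra_step (w : ℂ) (hw : w ≠ 0) (G : ℂ) (r : ℕ → ℝ) (p k : ℕ) (hk : k ≤ p + 1) :
    w^k * (G - ∑ i ∈ Finset.range k, (r i:ℂ) * (w⁻¹)^i)
      = (w⁻¹)^(p+1-k) * ((G - ∑ i ∈ Finset.range (p+2), (r i:ℂ) * (w⁻¹)^i) / (w⁻¹)^(p+1))
        + ∑ m ∈ Finset.range (p+2-k), (r (k+m):ℂ) * (w⁻¹)^m := by
  have hv : w⁻¹ ≠ 0 := inv_ne_zero hw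
  have h1 : (w⁻¹)^(p+1-k) * ((G - ∑ i ∈ Finset.range (p+2), (r i:ℂ) * (w⁻¹)^i) / (w⁻¹)^(p+1))
      = w^k * (G - ∑ i ∈ Finset.range (p+2), (r i:ℂ) * (w⁻¹)^i) := by
    have hsplit : (w⁻¹)^(p+1) = (w⁻¹)^k * (w⁻¹)^(p+1-k) := by
      rw [← pow_add]; congr 1; omega
    rw [hsplit, mul_div_assoc', mul_comm ((w⁻¹)^k), ← div_div,
      mul_div_cancel_left₀ _ (pow_ne_zero _ hv), inv_pow w k, div_inv_eq_mul]
    ring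
  have h2 : ∑ m ∈ Finset.range (p+2-k), (r (k+m):ℂ) * (w⁻¹)^m
      = w^k * ∑ i ∈ Finset.Ico k (p+2), (r i:ℂ) * (w⁻¹)^i := by
    rw [Finset.sum_Ico_eq_sum_range, Finset.mul_sum]
    apply Finset.sum_congr rfl
    intro m _
    have : (w⁻¹)^(k+m) = (w⁻¹)^k * (w⁻¹)^m := by rw [pow_add]
    rw [this]
    have hcan : w^k * (w⁻¹)^k = 1 := by
      rw [← mul_pow, mul_inv_cancel₀ hw, one_pow]
    calc (r (k+m):ℂ) * (w⁻¹)^m = (w^k * (w⁻¹)^k) * ((r (k+m):ℂ) * (w⁻¹)^m) := by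
          rw [hcan, one_mul]
    _ = w^k * ((r (k+m):ℂ) * ((w⁻¹)^k * (w⁻¹)^m)) := by ring
  have h3 : ∑ i ∈ Finset.Ico k (p+2), (r i:ℂ) * (w⁻¹)^i
      = ∑ i ∈ Finset.range (p+2), (r i:ℂ) * (w⁻¹)^i
        - ∑ i ∈ Finset.range k, (r i:ℂ) * (w⁻¹)^i := by
    rw [Finset.sum_Ico_eq_sub _ (by omega)]
  rw [h1, h2, h3]
  ring

lemma claimC (μ : Measure ℝ) [IsProbabilityMeasure μ] (p : ℕ) (r : ℕ → ℝ) (β : ℝ) (hβ : 0 < β)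
    (hT : Tendsto (fun z : ℂ =>
        (cauchyTransform μ z⁻¹ - ∑ i ∈ Finset.range (p + 2), (r i : ℂ) * z ^ i) / z ^ (p + 1))
      (nhdsWithin 0 (Delta 1 β)) (nhds 0))
    (k : ℕ) (hk : k ≤ p + 1) :
    Tendsto (fun y : ℝ => (I*(y:ℂ))^k * (cauchyTransform μ (I*(y:ℂ))
        - ∑ i ∈ Finset.range k, (r i : ℂ) * ((I*(y:ℂ))⁻¹)^i)) atTop (nhds ((r k : ℂ))) := by
  have h0 : Tendsto (fun y : ℝ =>
      (cauchyTransform μ (I*(y:ℂ)) - ∑ i ∈ Finset.range (p+2), (r i:ℂ) * ((I*(y:ℂ))⁻¹)^i)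
        / ((I*(y:ℂ))⁻¹)^(p+1)) atTop (nhds 0) := by
    have h := hT.comp (tendsto_path β hβ)
    simp only [Function.comp_def, inv_inv] at h
    exact h
  have hterm1 : Tendsto (fun y : ℝ => ((I*(y:ℂ))⁻¹)^(p+1-k) *
      ((cauchyTransform μ (I*(y:ℂ)) - ∑ i ∈ Finset.range (p+2), (r i:ℂ) * ((I*(y:ℂ))⁻¹)^i)
        / ((I*(y:ℂ))⁻¹)^(p+1))) atTop (nhds 0) := by
    have hp := (tendsto_inv_Iy.pow (p+1-k)).mul h0
    simpa using hp
  have hsum0 : ∑ m ∈ Finset.range (p+2-k), (r (k+m):ℂ) * (0:ℂ)^m = (r k : ℂ) := by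
    rw [Finset.sum_eq_single 0]
    · simp
    · intro b _ hb; simp [zero_pow hb]
    · intro h; exact absurd (Finset.mem_range.mpr (by omega)) h
  have hterm2 : Tendsto (fun y : ℝ => ∑ m ∈ Finset.range (p+2-k), (r (k+m):ℂ) * ((I*(y:ℂ))⁻¹)^m)
      atTop (nhds ((r k : ℂ))) := by
    rw [← hsum0]
    apply tendsto_finset_sum
    intro m _
    exact tendsto_const_nhds.mul (tendsto_inv_Iy.pow m)
  have h := hterm1.add hterm2
  rw [zero_add] at h
  apply h.congr'
  filter_upwards [eventually_gt_atTop (0:ℝ)] with y hy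
  exact (algebra_step (I*(y:ℂ)) (Iy_ne y hy) _ r p k hk).symm

lemma dct (μ : Measure ℝ) [IsProbabilityMeasure μ] (k : ℕ)
    (hInt : Integrable (fun t : ℝ => |t| ^ k) μ) :
    Tendsto (fun y : ℝ => ∫ t, (I*(y:ℂ)) * (t:ℂ)^k / (I*(y:ℂ) - (t:ℂ)) ∂μ) atTop
      (nhds ((∫ t, t^k ∂μ : ℝ) : ℂ)) := by
  have hcoe : ((∫ t, t^k ∂μ : ℝ) : ℂ) = ∫ t, ((t:ℂ))^k ∂μ := by
    rw [coe_pow_int k]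
    exact integral_ofReal.symm
  rw [hcoe]
  apply tendsto_integral_filter_of_dominated_convergence (fun t => |t|^k)
  · filter_upwards [eventually_gt_atTop (0:ℝ)] with y hy
    exact (cont_integrand y hy k).aestronglyMeasurable
  · filter_upwards [eventually_gt_atTop (0:ℝ)] with y hy
    filter_upwards with t
    exact norm_integrand y t hy k
  · exact hInt
  · filter_upwards with t
    have h1 : Tendsto (fun y : ℝ => (t:ℂ) * (I*(y:ℂ))⁻¹) atTop (nhds 0) := by
      have := tendsto_const_nhds (x := (t:ℂ)) (f := atTop (α := ℝ)) |>.mul tendsto_inv_Iy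
      simpa using this
    have h2 : Tendsto (fun y : ℝ => 1 - (t:ℂ) * (I*(y:ℂ))⁻¹) atTop (nhds 1) := by
      have := (tendsto_const_nhds (x := (1:ℂ)) (f := atTop (α := ℝ))).sub h1
      simpa using this
    have h3 : Tendsto (fun y : ℝ => ((t:ℂ))^k * (1 - (t:ℂ) * (I*(y:ℂ))⁻¹)⁻¹) atTop
        (nhds (((t:ℂ))^k)) := by
      have := tendsto_const_nhds (x := ((t:ℂ))^k) (f := atTop (α := ℝ)) |>.mul
        (h2.inv₀ one_ne_zero)
      simpa using this
    apply h3.congr'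
    filter_upwards [eventually_gt_atTop (0:ℝ)] with y hy
    have hne := Iy_sub_ne y t hy
    have hwne := Iy_ne y hy
    rw [show (1:ℂ) - (t:ℂ) * (I*(y:ℂ))⁻¹ = (I*(y:ℂ) - t) * (I*(y:ℂ))⁻¹ by
      rw [sub_mul, mul_inv_cancel₀ hwne], mul_inv, inv_inv]
    ring

lemma re_integrand (y t : ℝ) (hy : 0 < y) (k : ℕ) :
    ((I*(y:ℂ)) * (t:ℂ)^k / (I*(y:ℂ) - (t:ℂ))).re = t^k * (y^2/(y^2+t^2)) := by
  have hd : (0:ℝ) < y^2 + t^2 := by positivity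
  rw [Complex.div_re]
  simp only [← Complex.ofReal_pow, Complex.normSq_apply, Complex.sub_re, Complex.sub_im,
    Complex.mul_re, Complex.mul_im, Complex.I_re, Complex.I_im, Complex.ofReal_re,
    Complex.ofReal_im]
  field_simp [hd.ne']
  rw [div_eq_iff]
  · ring
  · apply ne_of_gt
    nlinarith [sq_nonneg t]

lemma re_swap (μ : Measure ℝ) [IsProbabilityMeasure μ] (k : ℕ)
    (hInt : Integrable (fun t : ℝ => |t| ^ (k - 1)) μ) (y : ℝ) (hy : 0 < y) :
    ∫ t, t^k * (y^2/(y^2+t^2)) ∂μ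
      = (∫ t, (I*(y:ℂ)) * (t:ℂ)^k / (I*(y:ℂ) - (t:ℂ)) ∂μ).re := by
  have h := integral_re (int_c μ k hInt y hy)
  simp only [RCLike.re_to_complex] at h
  rw [← h]
  apply integral_congr_ae
  filter_upwards with t
  exact (re_integrand y t hy k).symm

lemma frac_mono (t : ℝ) {A B : ℝ} (hA : 0 < A) (hAB : A ≤ B) :
    A^2/(A^2+t^2) ≤ B^2/(B^2+t^2) := by
  have hB : 0 < B := hA.trans_le hAB
  have hA2 : A^2 ≤ B^2 := by nlinarith
  rw [div_le_div_iff₀ (by positivity) (by positivity)]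
  nlinarith [sq_nonneg t, hA2]

lemma frac_tendsto (t : ℝ) :
    Tendsto (fun n : ℕ => ((n:ℝ)+1)^2/(((n:ℝ)+1)^2+t^2)) atTop (nhds 1) := by
  have hA : Tendsto (fun n : ℕ => ((n:ℝ)+1)^2) atTop atTop := by
    apply tendsto_atTop_mono (fun n : ℕ => by nlinarith [Nat.cast_nonneg (α := ℝ) n] :
      ∀ n : ℕ, (n:ℝ) ≤ ((n:ℝ)+1)^2)
    exact tendsto_natCast_atTop_atTop
  have h1 : Tendsto (fun n : ℕ => t^2/((n:ℝ)+1)^2) atTop (nhds 0) :=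
    Tendsto.div_atTop tendsto_const_nhds hA
  have h2 : Tendsto (fun n : ℕ => (1 + t^2/((n:ℝ)+1)^2)⁻¹) atTop (nhds 1) := by
    have := ((tendsto_const_nhds (x := (1:ℝ)) (f := atTop (α := ℕ))).add h1).inv₀ (by norm_num)
    simpa using this
  apply h2.congr
  intro n
  have hpos : (0:ℝ) < ((n:ℝ)+1)^2 := by positivity
  field_simp

lemma mct (μ : Measure ℝ) [IsProbabilityMeasure μ]
    (g : ℝ → ℝ) (hgc : Continuous g) (hg0 : ∀ᵐ t ∂μ, 0 ≤ g t)
    (hInt : ∀ n : ℕ, Integrable (fun t => g t * (((n:ℝ)+1)^2 / (((n:ℝ)+1)^2 + t^2))) μ)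
    (L : ℝ)
    (hlim : Tendsto (fun y : ℝ => ∫ t, g t * (y^2/(y^2 + t^2)) ∂μ) atTop (nhds L)) :
    Integrable g μ := by
  set c : ℕ → ℝ → ℝ := fun n t => ((n:ℝ)+1)^2 / (((n:ℝ)+1)^2 + t^2) with hc
  set F : ℕ → ℝ → ENNReal := fun n t => ENNReal.ofReal (g t * c n t) with hF
  have hccont : ∀ n : ℕ, Continuous (c n) := by
    intro n
    apply continuous_const.div (continuous_const.add (continuous_pow 2))
    intro t
    simp only [Pi.add_apply]
    positivity
  have hsub : Tendsto (fun n : ℕ => ((n:ℝ)+1)) atTop atTop :=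
    tendsto_atTop_add_const_right _ 1 tendsto_natCast_atTop_atTop
  have hlim' : Tendsto (fun n : ℕ => ∫ t, g t * c n t ∂μ) atTop (nhds L) := by
    have h := hlim.comp hsub
    simpa [Function.comp_def] using h
  have haemono : ∀ᵐ t ∂μ, Monotone (fun n => F n t) := by
    filter_upwards [hg0] with t hgt
    intro n m hnm
    apply ENNReal.ofReal_le_ofReal
    apply mul_le_mul_of_nonneg_left _ hgt
    exact frac_mono t (by positivity) (by exact_mod_cast by omega : ((n:ℝ)+1) ≤ ((m:ℝ)+1))
  have haemeas : ∀ n, AEMeasurable (F n) μ := fun n =>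
    ((hgc.mul (hccont n)).measurable.ennreal_ofReal).aemeasurable
  have hkey : ∫⁻ t, (⨆ n, F n t) ∂μ = ⨆ n, ∫⁻ t, F n t ∂μ := lintegral_iSup' haemeas haemono
  have hptlim : ∀ᵐ t ∂μ, (⨆ n, F n t) = ENNReal.ofReal (g t) := by
    filter_upwards [haemono] with t hmono
    have ht : Tendsto (fun n => F n t) atTop (nhds (ENNReal.ofReal (g t))) := by
      apply (ENNReal.continuous_ofReal.tendsto _).comp
      have h := (tendsto_const_nhds (x := g t) (f := atTop (α := ℕ))).mul (frac_tendsto t)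
      simpa using h
    exact tendsto_nhds_unique (tendsto_atTop_iSup hmono) ht
  have hFn : ∀ n, ∫⁻ t, F n t ∂μ = ENNReal.ofReal (∫ t, g t * c n t ∂μ) := by
    intro n
    rw [MeasureTheory.ofReal_integral_eq_lintegral_ofReal (hInt n)]
    filter_upwards [hg0] with t hgt
    have : 0 ≤ c n t := by positivity
    positivity
  have hmono2 : Monotone (fun n => ∫⁻ t, F n t ∂μ) := fun n m h =>
    lintegral_mono_ae (haemono.mono fun t ht => ht h)
  have hlim2 : Tendsto (fun n => ∫⁻ t, F n t ∂μ) atTop (nhds (ENNReal.ofReal L)) := by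
    simp_rw [hFn]
    exact (ENNReal.continuous_ofReal.tendsto _).comp hlim'
  have hsup : (⨆ n, ∫⁻ t, F n t ∂μ) = ENNReal.ofReal L :=
    tendsto_nhds_unique (tendsto_atTop_iSup hmono2) hlim2
  have hfin : ∫⁻ t, ENNReal.ofReal (g t) ∂μ < ⊤ := by
    rw [← lintegral_congr_ae hptlim, hkey, hsup]
    exact ENNReal.ofReal_lt_top
  refine ⟨hgc.aestronglyMeasurable, ?_⟩
  rw [hasFiniteIntegral_iff_norm]
  calc ∫⁻ t, ENNReal.ofReal ‖g t‖ ∂μ = ∫⁻ t, ENNReal.ofReal (g t) ∂μ := by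
        apply lintegral_congr_ae
        filter_upwards [hg0] with t hgt
        rw [Real.norm_eq_abs, _root_.abs_of_nonneg hgt]
  _ < ⊤ := hfin

lemma frac_bound (A t : ℝ) (hA : 0 < A) : |t| * (A^2/(A^2+t^2)) ≤ A/2 := by
  rw [mul_div_assoc']
  rw [div_le_div_iff₀ (by positivity) (by norm_num)]
  nlinarith [sq_nonneg (A - |t|), abs_nonneg t, _root_.sq_abs t]

lemma frac_le_one (A t : ℝ) (hA : 0 < A) : A^2/(A^2+t^2) ≤ 1 := by
  rw [div_le_one (by positivity)]
  nlinarith [sq_nonneg t]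

lemma frac_nonneg (A t : ℝ) (hA : 0 < A) : 0 ≤ A^2/(A^2+t^2) := by positivity

lemma int_frac (μ : Measure ℝ) [IsProbabilityMeasure μ] (m : ℕ)
    (hInt : Integrable (fun t : ℝ => |t| ^ (m - 1)) μ) (y : ℝ) (hy : 0 < y) :
    Integrable (fun t : ℝ => t^m * (y^2/(y^2+t^2))) μ := by
  apply (hInt.const_mul (max 1 (y/2))).mono
  · apply Continuous.aestronglyMeasurable
    apply (continuous_pow m).mul
    apply continuous_const.div (continuous_const.add (continuous_pow 2))
    intro t; simp only [Pi.add_apply]; positivity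
  filter_upwards with t
  rw [Real.norm_eq_abs, Real.norm_eq_abs, _root_.abs_of_nonneg
    (by positivity : (0:ℝ) ≤ max 1 (y/2) * |t|^(m-1)), abs_mul,
    _root_.abs_of_nonneg (frac_nonneg y t hy), _root_.abs_pow]
  rcases Nat.eq_zero_or_pos m with h0 | h0
  · subst h0
    simp only [pow_zero, one_mul, Nat.zero_sub, pow_zero, mul_one]
    exact (frac_le_one y t hy).trans (le_max_left _ _)
  · have hsplit : |t|^m = |t|^(m-1) * |t| := by rw [← pow_succ]; congr 1; omega
    rw [hsplit]
    calc |t|^(m-1) * |t| * (y^2/(y^2+t^2)) = |t|^(m-1) * (|t| * (y^2/(y^2+t^2))) := by ring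
    _ ≤ |t|^(m-1) * (y/2) := by
        exact mul_le_mul_of_nonneg_left (frac_bound y t hy) (by positivity)
    _ ≤ max 1 (y/2) * |t|^(m-1) := by
        rw [mul_comm]
        exact mul_le_mul_of_nonneg_right (le_max_right _ _) (by positivity)

lemma KL (μ : Measure ℝ) [IsProbabilityMeasure μ] (p : ℕ) (r : ℕ → ℝ) (β : ℝ) (hβ : 0 < β)
    (hT : Tendsto (fun z : ℂ =>
        (cauchyTransform μ z⁻¹ - ∑ i ∈ Finset.range (p + 2), (r i : ℂ) * z ^ i) / z ^ (p + 1))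
      (nhdsWithin 0 (Delta 1 β)) (nhds 0))
    (k : ℕ) (hk : k ≤ p) (hr0 : r 0 = 0)
    (hmom : ∀ j, j < k → ∫ t, t ^ j ∂μ = r (j + 1))
    (hIntprev : Integrable (fun t : ℝ => |t| ^ (k - 1)) μ) :
    Tendsto (fun y : ℝ => ∫ t, (I*(y:ℂ)) * (t:ℂ)^k / (I*(y:ℂ) - (t:ℂ)) ∂μ) atTop
      (nhds ((r (k+1) : ℂ))) := by
  apply (claimC μ p r β hβ hT (k+1) (by omega)).congr'
  filter_upwards [eventually_gt_atTop (0:ℝ)] with y hy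
  exact key_eq μ k r hr0 hmom hIntprev y hy

lemma hRe (μ : Measure ℝ) [IsProbabilityMeasure μ] (p : ℕ) (r : ℕ → ℝ) (β : ℝ) (hβ : 0 < β)
    (hT : Tendsto (fun z : ℂ =>
        (cauchyTransform μ z⁻¹ - ∑ i ∈ Finset.range (p + 2), (r i : ℂ) * z ^ i) / z ^ (p + 1))
      (nhdsWithin 0 (Delta 1 β)) (nhds 0))
    (k : ℕ) (hk : k ≤ p) (hr0 : r 0 = 0)
    (hmom : ∀ j, j < k → ∫ t, t ^ j ∂μ = r (j + 1))
    (hIntprev : Integrable (fun t : ℝ => |t| ^ (k - 1)) μ) :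
    Tendsto (fun y : ℝ => ∫ t, t^k * (y^2/(y^2+t^2)) ∂μ) atTop (nhds (r (k+1))) := by
  have hKL := KL μ p r β hβ hT k hk hr0 hmom hIntprev
  have h := (Complex.continuous_re.tendsto _).comp hKL
  simp only [Function.comp_def, Complex.ofReal_re] at h
  apply h.congr'
  filter_upwards [eventually_gt_atTop (0:ℝ)] with y hy
  exact (re_swap μ k hIntprev y hy).symm

lemma r0_eq_zero (μ : Measure ℝ) [IsProbabilityMeasure μ] (p : ℕ) (r : ℕ → ℝ) (β : ℝ)
    (hβ : 0 < β)
    (hT : Tendsto (fun z : ℂ =>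
        (cauchyTransform μ z⁻¹ - ∑ i ∈ Finset.range (p + 2), (r i : ℂ) * z ^ i) / z ^ (p + 1))
      (nhdsWithin 0 (Delta 1 β)) (nhds 0)) :
    r 0 = 0 := by
  have hC := claimC μ p r β hβ hT 0 (by omega)
  simp only [pow_zero, one_mul, Finset.range_zero, Finset.sum_empty, sub_zero] at hC
  have hG0 : Tendsto (fun y : ℝ => cauchyTransform μ (I*(y:ℂ))) atTop (nhds 0) := by
    apply squeeze_zero_norm' (a := fun y : ℝ => y⁻¹)
    · filter_upwards [eventually_gt_atTop (0:ℝ)] with y hy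
      unfold cauchyTransform
      have hb : ∀ᵐ t ∂μ, ‖(I*(y:ℂ) - ((t:ℝ):ℂ))⁻¹‖ ≤ y⁻¹ := by
        filter_upwards with t
        rw [norm_inv]
        exact inv_anti₀ hy (y_le_norm y t)
      have := norm_integral_le_of_norm_le_const hb
      simpa using this
    · exact tendsto_inv_atTop_zero
  have := tendsto_nhds_unique hC hG0
  exact_mod_cast this

lemma odd_step (μ : Measure ℝ) [IsProbabilityMeasure μ] (k : ℕ) (hk : 1 ≤ k) (ε C L : ℝ)
    (hεabs : |ε| = 1) (hC : 0 ≤ C)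
    (hg0 : ∀ᵐ t ∂μ, 0 ≤ ε * t^k + C * t^(k-1))
    (hIntprev : Integrable (fun t : ℝ => |t| ^ (k - 1)) μ)
    (hlim : Tendsto (fun y : ℝ => ∫ t, (ε * t^k + C * t^(k-1)) * (y^2/(y^2+t^2)) ∂μ) atTop
      (nhds L)) :
    Integrable (fun t : ℝ => |t| ^ k) μ := by
  set g : ℝ → ℝ := fun t => ε * t^k + C * t^(k-1) with hg
  have hgc : Continuous g := (continuous_const.mul (continuous_pow k)).add (continuous_const.mul (continuous_pow (k-1)))
  have hgint : Integrable g μ := by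
    apply mct μ g hgc hg0 _ L hlim
    intro n
    set A : ℝ := (n:ℝ) + 1 with hA
    have hApos : (0:ℝ) < A := by positivity
    apply (hIntprev.const_mul (A/2 + C)).mono
    · apply Continuous.aestronglyMeasurable
      apply hgc.mul
      apply continuous_const.div (continuous_const.add (continuous_pow 2))
      intro t; simp only [Pi.add_apply]; positivity
    filter_upwards with t
    rw [Real.norm_eq_abs, Real.norm_eq_abs, _root_.abs_of_nonneg
      (by positivity : (0:ℝ) ≤ (A/2 + C) * |t|^(k-1)), abs_mul,
      _root_.abs_of_nonneg (frac_nonneg A t hApos)]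
    have h1 : |g t| ≤ |t|^k + C * |t|^(k-1) := by
      calc |g t| ≤ |ε * t^k| + |C * t^(k-1)| := abs_add_le _ _
      _ = |t|^k + C * |t|^(k-1) := by
          rw [abs_mul, abs_mul, hεabs, one_mul, _root_.abs_of_nonneg hC, _root_.abs_pow,
            _root_.abs_pow]
    have hsplit : |t|^k = |t|^(k-1) * |t| := by rw [← pow_succ]; congr 1; omega
    calc |g t| * (A^2/(A^2+t^2)) ≤ (|t|^k + C * |t|^(k-1)) * (A^2/(A^2+t^2)) :=
          mul_le_mul_of_nonneg_right h1 (frac_nonneg A t hApos)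
    _ = |t|^(k-1) * (|t| * (A^2/(A^2+t^2))) + C * |t|^(k-1) * (A^2/(A^2+t^2)) := by
        rw [hsplit]; ring
    _ ≤ |t|^(k-1) * (A/2) + C * |t|^(k-1) * 1 := by
        apply add_le_add
        · exact mul_le_mul_of_nonneg_left (frac_bound A t hApos) (by positivity)
        · exact mul_le_mul_of_nonneg_left (frac_le_one A t hApos) (by positivity)
    _ = (A/2 + C) * |t|^(k-1) := by ring
  -- comparison
  apply (hgint.add (hIntprev.const_mul C)).mono
    ((_root_.continuous_abs.pow k).aestronglyMeasurable)
  filter_upwards [hg0] with t hgt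
  have hPi : (g + fun x => C * |x| ^ (k-1)) t = g t + C * |t| ^ (k-1) := rfl
  have hnn : (0:ℝ) ≤ g t + C * |t| ^ (k-1) := by
    have h2 : (0:ℝ) ≤ C * |t| ^ (k-1) := by positivity
    have h3 : g t = ε * t^k + C * t^(k-1) := rfl
    linarith
  rw [Real.norm_eq_abs, Real.norm_eq_abs, Pi.pow_apply, _root_.abs_of_nonneg (by positivity : (0:ℝ) ≤ |t|^k),
    hPi, _root_.abs_of_nonneg hnn]
  have hu : |t| ^ (k-1) = |t ^ (k-1)| := (_root_.abs_pow t (k-1)).symm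
  have huk : |t| ^ k = |ε * t ^ k| := by
    rw [abs_mul, hεabs, one_mul, _root_.abs_pow]
  have h3 : g t = ε * t^k + C * t^(k-1) := rfl
  rw [huk, hu, h3]
  have hc1 : C * t^(k-1) ≤ C * |t^(k-1)| := mul_le_mul_of_nonneg_left (le_abs_self _) hC
  have hc2 : -(C * |t^(k-1)|) ≤ C * t^(k-1) := by
    have := mul_le_mul_of_nonneg_left (neg_abs_le (t^(k-1))) hC
    linarith
  rcases le_total 0 (ε * t^k) with hpos | hneg
  · rw [_root_.abs_of_nonneg hpos]; linarith
  · rw [_root_.abs_of_nonpos hneg]; linarith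


/-- If a probability measure `μ` on `ℝ` has minorized or majorized support and
`G_μ(1/z)` has a nontangential Taylor expansion of order `p+1` with real coefficients
`r_0, …, r_{p+1}`, then `μ` has a finite `p`-th moment and `m_l(μ) = r_{l+1}` for
`l = 0, …, p`. -/
theorem cauchyTransform_taylor_implies_moment
    (μ : Measure ℝ) [IsProbabilityMeasure μ] (a : ℝ)
    (hsupp : μ (Set.Iic a) = 0 ∨ μ (Set.Ici a) = 0)
    (p : ℕ) (hp : 1 ≤ p) (r : ℕ → ℝ)
    (hexp : ∀ α > (0:ℝ), ∃ β > (0:ℝ),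
      Tendsto
        (fun z : ℂ =>
          (cauchyTransform μ z⁻¹ - ∑ i ∈ Finset.range (p + 2), (r i : ℂ) * z ^ i) / z ^ (p + 1))
        (nhdsWithin 0 (Delta α β)) (nhds 0)) :
    Integrable (fun t : ℝ => |t| ^ p) μ ∧
      ∀ l ≤ p, ∫ t : ℝ, t ^ l ∂μ = r (l + 1) := by
  obtain ⟨β, hβ, hT⟩ := hexp 1 one_pos
  have hr0 : r 0 = 0 := r0_eq_zero μ p r β hβ hT
  have master : ∀ k, k ≤ p → Integrable (fun t : ℝ => |t|^k) μ ∧ ∫ t, t^k ∂μ = r (k+1) := by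
    intro k
    induction k using Nat.strong_induction_on with
    | _ k ih =>
      intro hkp
      have hmom : ∀ j, j < k → ∫ t, t^j ∂μ = r (j+1) := fun j hj => (ih j hj (by omega)).2
      have hIntprev : Integrable (fun t : ℝ => |t|^(k-1)) μ := by
        rcases Nat.eq_zero_or_pos k with h0 | h0
        · subst h0; simpa using (integrable_const (1:ℝ))
        · exact (ih (k-1) (by omega) (by omega)).1
      have hIntk : Integrable (fun t : ℝ => |t|^k) μ := by
        rcases Nat.eq_zero_or_pos k with h0 | h0
        · subst h0; simpa using (integrable_const (1:ℝ))
        · have hIntprev2 : Integrable (fun t : ℝ => |t|^(k-1-1)) μ :=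
            int_abs_pow_le μ (k-1) hIntprev (by omega)
          have hRk : Tendsto (fun y : ℝ => ∫ t, t^k * (y^2/(y^2+t^2)) ∂μ) atTop
              (nhds (r (k+1))) := hRe μ p r β hβ hT k hkp hr0 hmom hIntprev
          have hRk1 : Tendsto (fun y : ℝ => ∫ t, t^(k-1) * (y^2/(y^2+t^2)) ∂μ) atTop
              (nhds (r k)) := by
            have h := hRe μ p r β hβ hT (k-1) (by omega) hr0
              (fun j hj => hmom j (by omega)) hIntprev2
            have hkk : k - 1 + 1 = k := by omega
            rw [hkk] at h
            exact h
          have hcomb : ∀ (ε Cc : ℝ), Tendsto (fun y : ℝ =>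
              ∫ t, (ε * t^k + Cc * t^(k-1)) * (y^2/(y^2+t^2)) ∂μ) atTop
              (nhds (ε * r (k+1) + Cc * r k)) := by
            intro ε Cc
            have h := (hRk.const_mul ε).add (hRk1.const_mul Cc)
            apply h.congr'
            filter_upwards [eventually_gt_atTop (0:ℝ)] with y hy
            rw [← integral_const_mul, ← integral_const_mul,
              ← integral_add ((int_frac μ k hIntprev y hy).const_mul ε)
                ((int_frac μ (k-1) hIntprev2 y hy).const_mul Cc)]
            apply integral_congr_ae
            filter_upwards with t
            ring
          have hsplitk : ∀ t : ℝ, t^k = t^(k-1) * t := by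
            intro t; rw [← pow_succ]; congr 1; omega
          rcases Nat.even_or_odd k with hke | hko
          · apply odd_step μ k h0 1 0 (1 * r (k+1) + 0 * r k) (by norm_num) le_rfl _ hIntprev
              (hcomb 1 0)
            filter_upwards with t
            have := hke.pow_nonneg t
            simpa using this
          · have hk1even : Even (k-1) := by
              rcases hko with ⟨m, hm⟩; exact ⟨m, by omega⟩
            rcases hsupp with hs | hs
            · have hae : ∀ᵐ t ∂μ, a < t := by
                rw [ae_iff]
                convert hs using 2
                ext t
                simp [not_lt]
              apply odd_step μ k h0 1 |a| (1 * r (k+1) + |a| * r k) (by norm_num)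
                (abs_nonneg a) _ hIntprev (hcomb 1 |a|)
              filter_upwards [hae] with t hta
              have h1 : 0 ≤ t^(k-1) := hk1even.pow_nonneg t
              have h2 : 0 ≤ t + |a| := by nlinarith [neg_abs_le a]
              have heq : 1 * t^k + |a| * t^(k-1) = t^(k-1) * (t + |a|) := by
                rw [one_mul, hsplitk t]; ring
              rw [heq]
              positivity
            · have hae : ∀ᵐ t ∂μ, t < a := by
                rw [ae_iff]
                convert hs using 2
                ext t
                simp [not_lt]
              apply odd_step μ k h0 (-1) |a| ((-1) * r (k+1) + |a| * r k) (by norm_num)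
                (abs_nonneg a) _ hIntprev (hcomb (-1) |a|)
              filter_upwards [hae] with t hta
              have h1 : 0 ≤ t^(k-1) := hk1even.pow_nonneg t
              have h2 : 0 ≤ |a| - t := by nlinarith [le_abs_self a]
              have heq : (-1) * t^k + |a| * t^(k-1) = t^(k-1) * (|a| - t) := by
                rw [hsplitk t]; ring
              rw [heq]
              positivity
      refine ⟨hIntk, ?_⟩
      have huniq := tendsto_nhds_unique (dct μ k hIntk)
        (KL μ p r β hβ hT k hkp hr0 hmom hIntprev)
      exact_mod_cast huniq
  exact ⟨(master p le_rfl).1, fun l hl => (master l hl).2⟩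
end

section
/- Let μ be a probability measure on ℝ with finite moments of orders 1 through p (p a positive integer). Then for each q ∈ {0,...,p}, the limit as y → 0⁺ of (1/(iy)^{q+1})·(G_μ(1/(iy)) − Σ_{l=1}^{q} m_{l-1}(μ)(iy)^l), if it exists and is real, has real part equal to lim_{y→0⁺} ∫ t^q/(1 + y²t²) dμ(t). -/
open MeasureTheory Complex Filter Set

lemma one_sub_ne (y t : ℝ) : (1 : ℂ) - Complex.I * y * t ≠ 0 := by
  intro h
  have := congrArg Complex.re h
  simp [Complex.sub_re, Complex.mul_re] at this

lemma key_pointwise (z : ℂ) (hz : z ≠ 0) (t : ℝ) (h1 : (1:ℂ) - z*t ≠ 0) (q : ℕ) :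
    (z⁻¹ - t)⁻¹ = ∑ l ∈ Finset.Icc 1 q, (t:ℂ)^(l-1) * z^l + z^(q+1) * ((t:ℂ)^q / (1 - z*t)) := by
  induction q with
  | zero =>
      rw [show z⁻¹ - (t:ℂ) = z⁻¹ * (1 - z*t) by field_simp, mul_inv, inv_inv]
      simp [div_eq_mul_inv]
  | succ q ih =>
      rw [Finset.sum_Icc_succ_top (by omega : 1 ≤ q + 1), ih]
      have : z ^ (q + 1) * ((t:ℂ) ^ q / (1 - z * t))
          = (t:ℂ) ^ (q + 1 - 1) * z ^ (q + 1) + z ^ (q + 1 + 1) * ((t:ℂ) ^ (q + 1) / (1 - z * t)) := by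
        simp only [Nat.add_sub_cancel]
        field_simp
        ring
      rw [this]; ring

lemma int_pow_s1 (μ : Measure ℝ) (p : ℕ)
    (hmom : ∀ l ≤ p, Integrable (fun t : ℝ => |t| ^ l) μ)
    (k : ℕ) (hk : k ≤ p) : Integrable (fun t : ℝ => ((t:ℂ))^k) μ := by
  have hr : Integrable (fun t : ℝ => t ^ k) μ := by
    refine (hmom k hk).mono ?_ ?_
    · exact (continuous_pow k).aestronglyMeasurable
    · filter_upwards with t
      simp [abs_pow]
  have := hr.ofReal (𝕜 := ℂ)
  simpa using this

lemma int_g (μ : Measure ℝ) (p : ℕ)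
    (hmom : ∀ l ≤ p, Integrable (fun t : ℝ => |t| ^ l) μ)
    (q : ℕ) (hq : q ≤ p) (y : ℝ) :
    Integrable (fun t : ℝ => (t:ℂ)^q / (1 - Complex.I * y * t)) μ := by
  refine (hmom q hq).mono ?_ ?_
  · apply Continuous.aestronglyMeasurable
    exact (continuous_ofReal.pow q).div
      (continuous_const.sub (continuous_const.mul continuous_ofReal))
      (fun t => one_sub_ne y t)
  · filter_upwards with t
    have h1 : (1:ℝ) ≤ ‖(1:ℂ) - Complex.I * y * t‖ := by
      calc (1:ℝ) = |((1:ℂ) - Complex.I * y * t).re| := by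
            simp [Complex.sub_re, Complex.mul_re]
        _ ≤ ‖(1:ℂ) - Complex.I * y * t‖ := Complex.abs_re_le_norm _
    rw [norm_div]
    have : ‖((t:ℂ))^q‖ = |t|^q := by
      simp [norm_pow, Complex.norm_real]
    rw [this]
    calc |t|^q / ‖(1:ℂ) - Complex.I * y * t‖ ≤ |t|^q / 1 := by
          apply div_le_div_of_nonneg_left <;> first | positivity | linarith
      _ ≤ ‖|t|^q‖ := by simp [abs_pow]


lemma expr_eq (μ : Measure ℝ) [IsProbabilityMeasure μ] (p : ℕ)
    (hmom : ∀ l ≤ p, Integrable (fun t : ℝ => |t| ^ l) μ)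
    (q : ℕ) (hq : q ≤ p) (y : ℝ) (hy : 0 < y) :
    ((Complex.I * y) ^ (q + 1))⁻¹ *
      (cauchyTransform μ (Complex.I * y)⁻¹ -
        ∑ l ∈ Finset.Icc 1 q, ((∫ t : ℝ, t ^ (l - 1) ∂μ : ℝ) : ℂ) * (Complex.I * y) ^ l)
    = ∫ t : ℝ, (t:ℂ)^q / (1 - Complex.I * y * t) ∂μ := by
  set z : ℂ := Complex.I * y with hzdef
  have hz : z ≠ 0 := by
    simp [hzdef, Complex.ext_iff, Complex.I_ne_zero, hy.ne']
  have hCT : cauchyTransform μ z⁻¹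
      = (∑ l ∈ Finset.Icc 1 q, ((∫ t : ℝ, t ^ (l - 1) ∂μ : ℝ) : ℂ) * z ^ l)
        + z^(q+1) * ∫ t : ℝ, (t:ℂ)^q / (1 - z * t) ∂μ := by
    unfold cauchyTransform
    have heq : ∀ t : ℝ, (z⁻¹ - (t:ℝ))⁻¹
        = (∑ l ∈ Finset.Icc 1 q, (t:ℂ)^(l-1) * z^l) + z^(q+1) * ((t:ℂ)^q / (1 - z*t)) :=
      fun t => key_pointwise z hz t (one_sub_ne y t) q
    rw [integral_congr_ae (Filter.Eventually.of_forall heq)]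
    have hintsum : Integrable (fun t : ℝ => ∑ l ∈ Finset.Icc 1 q, (t:ℂ)^(l-1) * z^l) μ := by
      apply integrable_finset_sum
      intro l hl
      exact (int_pow_s1 μ p hmom (l-1) (by
        have := (Finset.mem_Icc.mp hl).2; omega)).mul_const _
    have hintg := (int_g μ p hmom q hq y).const_mul (z^(q+1))
    rw [integral_add hintsum hintg, integral_finset_sum, integral_const_mul]
    · congr 1
      apply Finset.sum_congr rfl
      intro l hl
      rw [integral_mul_const]
      congr 1
      rw [show (fun a : ℝ => ((a:ℂ)) ^ (l-1)) = fun a : ℝ => ((a ^ (l-1) : ℝ) : ℂ) by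
        funext a; push_cast; ring]
      exact integral_ofReal
    · intro l hl
      exact (int_pow_s1 μ p hmom (l-1) (by
        have := (Finset.mem_Icc.mp hl).2; omega)).mul_const _
  rw [hCT]
  rw [add_sub_cancel_left, ← mul_assoc, inv_mul_cancel₀ (pow_ne_zero _ hz), one_mul]

lemma re_eq (μ : Measure ℝ) [IsProbabilityMeasure μ] (p : ℕ)
    (hmom : ∀ l ≤ p, Integrable (fun t : ℝ => |t| ^ l) μ)
    (q : ℕ) (hq : q ≤ p) (y : ℝ) :
    (∫ t : ℝ, (t:ℂ)^q / (1 - Complex.I * y * t) ∂μ).re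
      = ∫ t : ℝ, t ^ q / (1 + y ^ 2 * t ^ 2) ∂μ := by
  rw [← RCLike.re_eq_complex_re, ← integral_re (int_g μ p hmom q hq y)]
  apply integral_congr_ae
  filter_upwards with t
  rw [RCLike.re_eq_complex_re]
  rw [Complex.div_re]
  have h1 : ((t:ℂ)^q).re = t^q := by
    rw [show ((t:ℂ))^q = ((t^q : ℝ) : ℂ) by push_cast; ring, Complex.ofReal_re]
  have h2 : ((t:ℂ)^q).im = 0 := by
    rw [show ((t:ℂ))^q = ((t^q : ℝ) : ℂ) by push_cast; ring, Complex.ofReal_im]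
  have h3 : ((1:ℂ) - Complex.I * y * t).re = 1 := by
    simp [Complex.sub_re, Complex.mul_re]
  have h4 : ((1:ℂ) - Complex.I * y * t).im = -(y*t) := by
    simp [Complex.sub_im, Complex.mul_im]
  have h5 : Complex.normSq ((1:ℂ) - Complex.I * y * t) = 1 + y^2*t^2 := by
    rw [Complex.normSq_apply, h3, h4]; ring
  rw [h1, h2, h3, h4, h5]
  ring


/-- Let `μ` be a probability measure on `ℝ` with finite moments of orders `1,…,p`, and
`0 ≤ q ≤ p`.  If the limit as `y → 0⁺` of
`(1/(iy)^{q+1}) (G_μ(1/(iy)) - ∑_{l=1}^q m_{l-1}(μ) (iy)^l)` exists and equals the real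
number `L`, then `L = lim_{y→0⁺} ∫ t^q/(1+y²t²) dμ(t)`. -/
theorem limit_real_part_eq_integral_limit
    (μ : Measure ℝ) [IsProbabilityMeasure μ] (p : ℕ) (hp : 1 ≤ p)
    (hmom : ∀ l ≤ p, Integrable (fun t : ℝ => |t| ^ l) μ)
    (q : ℕ) (hq : q ≤ p) (L : ℝ)
    (hlim : Tendsto
      (fun y : ℝ =>
        ((Complex.I * y) ^ (q + 1))⁻¹ *
          (cauchyTransform μ (Complex.I * y)⁻¹ -
            ∑ l ∈ Finset.Icc 1 q, ((∫ t : ℝ, t ^ (l - 1) ∂μ : ℝ) : ℂ) * (Complex.I * y) ^ l))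
      (nhdsWithin 0 (Set.Ioi (0:ℝ))) (nhds (L : ℂ))) :
    Tendsto (fun y : ℝ => ∫ t : ℝ, t ^ q / (1 + y ^ 2 * t ^ 2) ∂μ)
      (nhdsWithin 0 (Set.Ioi (0:ℝ))) (nhds L) := by
  have h2 : Tendsto
      (fun y : ℝ =>
        (((Complex.I * y) ^ (q + 1))⁻¹ *
          (cauchyTransform μ (Complex.I * y)⁻¹ -
            ∑ l ∈ Finset.Icc 1 q, ((∫ t : ℝ, t ^ (l - 1) ∂μ : ℝ) : ℂ) * (Complex.I * y) ^ l)).re)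
      (nhdsWithin 0 (Set.Ioi (0:ℝ))) (nhds L) := by
    have := (Complex.continuous_re.tendsto _).comp hlim
    simpa only [Function.comp_def, Complex.ofReal_re] using this
  refine h2.congr' ?_
  filter_upwards [self_mem_nhdsWithin] with y hy
  rw [expr_eq μ p hmom q hq y hy, re_eq μ p hmom q hq y]
end

section
/- Let μ be a positive finite measure on ℝ whose support is minorized or majorized (contained in (a,∞) or (−∞,a)), with finite moments of order 0,...,q−1, and suppose lim_{y→0⁺} ∫ t^q/(1+y²t²) dμ(t) exists and is finite. Then ∫ |t|^q dμ(t) < ∞ provided q is even, or the support hypothesis holds. -/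
/-!
If the support of `μ` lies in `(a, ∞)` then `|t|^q ≤ t^q + 2|a|^q` almost everywhere (and
symmetrically, with `(-1)^q t^q`, if it lies in `(-∞, a)`), so the integrals of
`|t|^q / (1 + y²t²)` are bounded as `y → 0⁺` by those of `± t^q / (1 + y²t²)`, which converge.
These integrands are integrable because `2|yt| ≤ 1 + y²t²` bounds them by `|t|^(q-1) / (2y)`.
Fatou's lemma then bounds `∫ |t|^q dμ`.
-/

open MeasureTheory Filter Set Topology

theorem integrable_of_tendsto_of_isBoundedUnder_integral_norm {α E ι : Type*}
    [MeasurableSpace α] [NormedAddCommGroup E] {μ : Measure α}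
    {l : Filter ι} [l.NeBot] [l.IsCountablyGenerated] {F : ι → α → E} {f : α → E}
    (hf : AEStronglyMeasurable f μ) (hF_meas : ∀ i, AEStronglyMeasurable (F i) μ)
    (hF_int : ∀ᶠ i in l, Integrable (F i) μ)
    (hlim : ∀ᵐ x ∂μ, Tendsto (fun i => F i x) l (𝓝 (f x)))
    (hbdd : IsBoundedUnder (· ≤ ·) l fun i => ∫ x, ‖F i x‖ ∂μ) :
    Integrable f μ := by
  obtain ⟨C, hC⟩ := hbdd
  refine ⟨hf, ?_⟩
  calc ∫⁻ x, ‖f x‖ₑ ∂μ = ∫⁻ x, liminf (fun i => ‖F i x‖ₑ) l ∂μ :=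
        lintegral_congr_ae (by filter_upwards [hlim] with x hx using hx.enorm.liminf_eq.symm)
    _ ≤ liminf (fun i => ∫⁻ x, ‖F i x‖ₑ ∂μ) l :=
        lintegral_liminf_le' fun i => (hF_meas i).enorm
    _ ≤ ENNReal.ofReal C := by
        refine liminf_le_of_frequently_le' (Eventually.frequently ?_)
        filter_upwards [hF_int, hC] with i hi hiC
        rw [← ofReal_integral_norm_eq_lintegral_enorm hi]
        exact ENNReal.ofReal_le_ofReal hiC
    _ < ⊤ := ENNReal.ofReal_lt_top

theorem continuous_pow_div_one_add_sq_mul_sq (q : ℕ) (y : ℝ) :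
    Continuous fun t : ℝ => t ^ q / (1 + y ^ 2 * t ^ 2) :=
  (continuous_pow q).div (by fun_prop) fun t => by positivity

theorem integrable_pow_succ_div_one_add_sq_mul_sq {μ : Measure ℝ} {n : ℕ}
    (hn : Integrable (fun t : ℝ => |t| ^ n) μ) {y : ℝ} (hy : y ≠ 0) :
    Integrable (fun t : ℝ => t ^ (n + 1) / (1 + y ^ 2 * t ^ 2)) μ := by
  refine (hn.const_mul (2 * |y|)⁻¹).mono
    (continuous_pow_div_one_add_sq_mul_sq _ y).aestronglyMeasurable (ae_of_all _ fun t => ?_)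
  have hy' : 0 < 2 * |y| := by positivity
  have hD : 0 < 1 + y ^ 2 * t ^ 2 := by positivity
  have hamgm : 2 * |y| * |t| ≤ 1 + y ^ 2 * t ^ 2 := by
    nlinarith [sq_nonneg (|y| * |t| - 1), sq_abs y, sq_abs t]
  simp only [norm_div, norm_mul, norm_pow, Real.norm_eq_abs, abs_abs, abs_inv, abs_of_pos hD,
    abs_of_pos hy']
  rw [div_le_iff₀ hD, inv_mul_eq_div, div_mul_eq_mul_div, le_div_iff₀ hy']
  calc |t| ^ (n + 1) * (2 * |y|) = |t| ^ n * (2 * |y| * |t|) := by ring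
    _ ≤ |t| ^ n * (1 + y ^ 2 * t ^ 2) := by gcongr

theorem abs_pow_le_pow_add_of_lt {a t : ℝ} (h : a < t) (q : ℕ) :
    |t| ^ q ≤ t ^ q + 2 * |a| ^ q := by
  rcases le_or_gt 0 t with ht | ht
  · rw [abs_of_nonneg ht]
    linarith [pow_nonneg (abs_nonneg a) q]
  · have hta : |t| ≤ |a| := by
      rw [abs_of_neg ht]
      linarith [neg_le_abs a]
    have hpow : |t| ^ q ≤ |a| ^ q := pow_le_pow_left₀ (abs_nonneg t) hta q
    have hneg : -|t| ^ q ≤ t ^ q := by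
      rw [← abs_pow]
      exact neg_abs_le _
    linarith

theorem exists_ae_abs_pow_le_mul_pow_add {μ : Measure ℝ} {a : ℝ}
    (hsupp : μ (Iic a) = 0 ∨ μ (Ici a) = 0) (q : ℕ) :
    ∃ s : ℝ, ∀ᵐ t ∂μ, |t| ^ q ≤ s * t ^ q + 2 * |a| ^ q := by
  rcases hsupp with h | h
  · refine ⟨1, ?_⟩
    filter_upwards [measure_eq_zero_iff_ae_notMem.1 h] with t ht
    rw [one_mul]
    exact abs_pow_le_pow_add_of_lt (not_le.1 ht) q
  · refine ⟨(-1) ^ q, ?_⟩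
    filter_upwards [measure_eq_zero_iff_ae_notMem.1 h] with t ht
    have := abs_pow_le_pow_add_of_lt (neg_lt_neg (not_le.1 ht)) q
    rwa [abs_neg, abs_neg, neg_pow] at this

theorem integral_norm_div_one_add_sq_mul_sq_le {μ : Measure ℝ} [IsFiniteMeasure μ] {q : ℕ}
    {s C y : ℝ} (hC : 0 ≤ C) (hle : ∀ᵐ t ∂μ, |t| ^ q ≤ s * t ^ q + C)
    (hint : Integrable (fun t : ℝ => t ^ q / (1 + y ^ 2 * t ^ 2)) μ) :
    ∫ t, ‖t ^ q / (1 + y ^ 2 * t ^ 2)‖ ∂μ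
      ≤ s * ∫ t, t ^ q / (1 + y ^ 2 * t ^ 2) ∂μ + C * μ.real univ := by
  calc ∫ t, ‖t ^ q / (1 + y ^ 2 * t ^ 2)‖ ∂μ
      ≤ ∫ t, (s * (t ^ q / (1 + y ^ 2 * t ^ 2)) + C) ∂μ := by
        refine integral_mono_ae hint.norm ((hint.const_mul s).add (integrable_const C)) ?_
        filter_upwards [hle] with t ht
        have hD : 1 ≤ 1 + y ^ 2 * t ^ 2 := le_add_of_nonneg_right (by positivity)
        calc ‖t ^ q / (1 + y ^ 2 * t ^ 2)‖ = |t| ^ q / (1 + y ^ 2 * t ^ 2) := by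
              rw [Real.norm_eq_abs, abs_div, abs_pow, abs_of_pos (zero_lt_one.trans_le hD)]
          _ ≤ (s * t ^ q + C) / (1 + y ^ 2 * t ^ 2) := by gcongr
          _ = s * (t ^ q / (1 + y ^ 2 * t ^ 2)) + C / (1 + y ^ 2 * t ^ 2) := by ring
          _ ≤ s * (t ^ q / (1 + y ^ 2 * t ^ 2)) + C := by gcongr; exact div_le_self hC hD
    _ = s * ∫ t, t ^ q / (1 + y ^ 2 * t ^ 2) ∂μ + C * μ.real univ := by
        rw [integral_add (hint.const_mul s) (integrable_const C), integral_const_mul,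
          integral_const, smul_eq_mul, mul_comm C]

/-- Let `μ` be a positive finite measure on `ℝ` whose support is minorized or majorized,
with finite moments of orders `0,…,q-1`, and such that
`lim_{y→0⁺} ∫ t^q/(1+y²t²) dμ(t)` exists and is finite.  Then `∫ |t|^q dμ(t) < ∞`. -/
theorem finite_qth_moment_of_limit
    (μ : Measure ℝ) [IsFiniteMeasure μ] (a : ℝ)
    (hsupp : μ (Set.Iic a) = 0 ∨ μ (Set.Ici a) = 0)
    (q : ℕ)
    (hmom : ∀ l < q, Integrable (fun t : ℝ => |t| ^ l) μ)
    (L : ℝ)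
    (hlim : Tendsto (fun y : ℝ => ∫ t : ℝ, t ^ q / (1 + y ^ 2 * t ^ 2) ∂μ)
      (nhdsWithin 0 (Set.Ioi (0:ℝ))) (nhds L)) :
    Integrable (fun t : ℝ => |t| ^ q) μ := by
  cases q with
  | zero => simp
  | succ n =>
    obtain ⟨s, hs⟩ := exists_ae_abs_pow_le_mul_pow_add hsupp (n + 1)
    have hint : ∀ᶠ y in 𝓝[>] 0, Integrable (fun t : ℝ => t ^ (n + 1) / (1 + y ^ 2 * t ^ 2)) μ :=
      eventually_mem_nhdsWithin.mono fun y hy =>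
        integrable_pow_succ_div_one_add_sq_mul_sq (hmom n n.lt_succ_self) (ne_of_gt hy)
    have hbdd : IsBoundedUnder (· ≤ ·) (𝓝[>] 0)
        fun y : ℝ => ∫ t, ‖t ^ (n + 1) / (1 + y ^ 2 * t ^ 2)‖ ∂μ :=
      ((hlim.const_mul s).add_const _).isBoundedUnder_le.mono_le <| hint.mono fun y hy =>
        integral_norm_div_one_add_sq_mul_sq_le (by positivity) hs hy
    have hconv (t : ℝ) : Tendsto (fun y : ℝ => t ^ (n + 1) / (1 + y ^ 2 * t ^ 2)) (𝓝[>] 0)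
        (𝓝 (t ^ (n + 1))) :=
      ((continuous_const.div (by fun_prop) fun y => by positivity).tendsto' 0 _
        (by simp)).mono_left nhdsWithin_le_nhds
    have hpow : Integrable (fun t : ℝ => t ^ (n + 1)) μ :=
      integrable_of_tendsto_of_isBoundedUnder_integral_norm
        (continuous_pow _).aestronglyMeasurable
        (fun y => (continuous_pow_div_one_add_sq_mul_sq _ y).aestronglyMeasurable)
        hint (ae_of_all _ hconv) hbdd
    simpa only [abs_pow] using hpow.abs
end

section
/- For every finite sequence of real numbers (m_1, ..., m_p) arising as the first p moments of some probability measure on ℝ, there exists a compactly supported probability measure (a finite convex combination of Dirac masses) whose first p moments are exactly (m_1, ..., m_p). -/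
open MeasureTheory Set
open scoped Pointwise

/-!
The moment vector `∫ (1, t, …, tᵖ) dμ` is a barycenter of the moment curve, hence lies in its
convex hull, i.e. it is a finite convex combination of points of the curve.
That a barycenter `b` of an integrable `f` in a finite-dimensional space lies in the convex hull
of the values of `f` goes by induction on the dimension: `b` lies in the closure of the hull; if
it is not in the hull, it is on the boundary, so a nonzero supporting functional `φ` at `b`
satisfies `φ ∘ f ≤ φ b` with equal means, hence `φ ∘ f = φ b` a.e. Then `f - b` takes values
a.e. in `ker φ`, of smaller dimension, where the induction hypothesis applies.
-/

theorem Convex.exists_ne_zero_forall_le_of_mem_frontier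
    {E : Type*} [NormedAddCommGroup E] [NormedSpace ℝ E] [FiniteDimensional ℝ E]
    {C : Set E} (hC : Convex ℝ C) {b : E} (hb : b ∈ frontier C) :
    ∃ φ : StrongDual ℝ E, φ ≠ 0 ∧ ∀ y ∈ C, φ y ≤ φ b := by
  by_cases hspan : affineSpan ℝ C = ⊤
  · exact geometric_hahn_banach_of_nonempty_interior_point hC hb.2
      (hC.interior_nonempty_iff_affineSpan_eq_top.2 hspan)
  -- `C` lies in a proper affine subspace: a functional vanishing on its direction is constant
  -- on `closure C`.
  obtain ⟨c, hc⟩ : C.Nonempty := closure_nonempty_iff.1 ⟨b, hb.1⟩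
  have hV : vectorSpan ℝ C < ⊤ := by
    refine lt_top_iff_ne_top.2 fun h => hspan ?_
    exact (AffineSubspace.affineSpan_eq_top_iff_vectorSpan_eq_top_of_nonempty ℝ E E ⟨c, hc⟩).2 h
  obtain ⟨φ, hφ0, hφV⟩ := (vectorSpan ℝ C).exists_le_ker_of_lt_top hV
  let ψ : StrongDual ℝ E := LinearMap.toContinuousLinearMap φ
  have hconst : C ⊆ {y | ψ y = ψ c} := fun y hy => by
    simpa [ψ, sub_eq_zero] using hφV (vsub_mem_vectorSpan ℝ hy hc)
  have hψb : ψ b = ψ c :=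
    closure_minimal hconst (isClosed_eq ψ.continuous continuous_const) hb.1
  refine ⟨ψ, fun h => hφ0 ?_, fun y hy => (hconst hy).trans hψb.symm |>.le⟩
  ext x
  simpa [ψ] using congrArg (· x) h

theorem integral_mem_convexHull {α : Type*} [MeasurableSpace α] {μ : Measure α}
    [IsProbabilityMeasure μ] {E : Type*} [NormedAddCommGroup E] [NormedSpace ℝ E]
    [FiniteDimensional ℝ E] {f : α → E} (hf : Integrable f μ) {s : Set E}
    (hfs : ∀ᵐ a ∂μ, f a ∈ s) :
    ∫ a, f a ∂μ ∈ convexHull ℝ s := by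
  induction hn : Module.finrank ℝ E using Nat.strong_induction_on generalizing E with
  | _ n ih =>
  set b := ∫ a, f a ∂μ
  by_contra hb
  have hbcl : b ∈ closure (convexHull ℝ s) :=
    (convex_convexHull ℝ s).closure.integral_mem isClosed_closure
      (hfs.mono fun a ha => subset_closure (subset_convexHull ℝ s ha)) hf
  obtain ⟨φ, hφ0, hφ⟩ := (convex_convexHull ℝ s).exists_ne_zero_forall_le_of_mem_frontier
    ⟨hbcl, fun h => hb (interior_subset h)⟩
  have hφf : (fun a => φ (f a)) =ᵐ[μ] fun _ => φ b := by
    refine (integral_eq_iff_of_ae_le (φ.integrable_comp hf) (integrable_const _) ?_).1 ?_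
    · filter_upwards [hfs] with a ha using hφ _ (subset_convexHull ℝ s ha)
    · simp [b, φ.integral_comp_comm hf]
  let K : Submodule ℝ E := LinearMap.ker (φ : E →ₗ[ℝ] ℝ)
  have hfK : ∀ᵐ a ∂μ, f a - b ∈ K := by
    filter_upwards [hφf] with a ha
    simp [K, ha]
  obtain ⟨P, hP⟩ := Submodule.ClosedComplemented.of_finiteDimensional K
  have hKn : Module.finrank ℝ K < n := by
    refine hn ▸ Submodule.finrank_lt fun h => hφ0 ?_
    ext x
    simpa [K] using (h ▸ Submodule.mem_top : x ∈ K)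
  have hfb_int : Integrable (fun a => f a - b) μ := hf.sub (integrable_const b)
  have hfb_zero : ∫ a, f a - b ∂μ = 0 := by simp [integral_sub hf (integrable_const b), b]
  have hzero := ih _ hKn (P.integrable_comp hfb_int) (s := K.subtype ⁻¹' (-b +ᵥ s)) ?_ rfl
  · rw [P.integral_comp_comm hfb_int, hfb_zero, map_zero] at hzero
    have hzero' := convexHull_mono (image_preimage_subset _ _)
      (K.subtype.image_convexHull _ ▸ mem_image_of_mem K.subtype hzero)
    rw [convexHull_vadd] at hzero'
    obtain ⟨y, hy, hyb⟩ := mem_vadd_set.1 hzero'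
    exact hb (neg_add_eq_zero.1 hyb ▸ hy)
  · filter_upwards [hfs, hfK] with a h1 h2
    simpa [hP ⟨_, h2⟩, mem_vadd_set] using ⟨f a, h1, by abel⟩

theorem exists_convexCombination_eq_integral {α : Type*} [MeasurableSpace α] {μ : Measure α}
    [IsProbabilityMeasure μ] {E : Type*} [NormedAddCommGroup E] [NormedSpace ℝ E]
    [FiniteDimensional ℝ E] {f : α → E} (hf : Integrable f μ) :
    ∃ (n : ℕ) (w : Fin n → ℝ) (x : Fin n → α),
      (∀ j, 0 ≤ w j) ∧ ∑ j, w j = 1 ∧ ∑ j, w j • f (x j) = ∫ a, f a ∂μ := by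
  obtain ⟨ι, _, w, z, hw0, hw1, hz, hwz⟩ := mem_convexHull_iff_exists_fintype.1
    (integral_mem_convexHull hf (s := range f) (ae_of_all _ mem_range_self))
  choose x hx using hz
  let e := (Fintype.equivFin ι).symm
  refine ⟨Fintype.card ι, w ∘ e, x ∘ e, fun j => hw0 _, ?_, ?_⟩
  · rw [← hw1]; exact e.sum_comp w
  · rw [← hwz]; simpa [hx] using e.sum_comp fun i => w i • z i

section FiniteDirac

variable {α ι : Type*} [MeasurableSpace α] [Fintype ι] {w : ι → ℝ} (x : ι → α)

theorem isProbabilityMeasure_sum_smul_dirac (hw0 : ∀ j, 0 ≤ w j) (hw1 : ∑ j, w j = 1) :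
    IsProbabilityMeasure (∑ j, ENNReal.ofReal (w j) • Measure.dirac (x j)) := by
  constructor
  simp [← ENNReal.ofReal_sum_of_nonneg fun j _ => hw0 j, hw1]

theorem integral_sum_smul_dirac [MeasurableSingletonClass α] {E : Type*} [NormedAddCommGroup E]
    [NormedSpace ℝ E] [CompleteSpace E] (hw0 : ∀ j, 0 ≤ w j) (g : α → E) :
    ∫ t, g t ∂(∑ j, ENNReal.ofReal (w j) • Measure.dirac (x j)) = ∑ j, w j • g (x j) := by
  rw [integral_finsetSum_measure fun j _ =>
    (integrable_dirac enorm_lt_top).smul_measure ENNReal.ofReal_ne_top]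
  simp [integral_smul_measure, ENNReal.toReal_ofReal (hw0 _)]

end FiniteDirac

theorem exists_discrete_measure_same_moments_general
    (μ : Measure ℝ) [IsProbabilityMeasure μ] (p : ℕ)
    (hmom : ∀ i ≤ p, Integrable (fun t : ℝ => |t| ^ i) μ) :
    ∃ (n : ℕ) (w : Fin n → ℝ) (x : Fin n → ℝ),
      (∀ j, 0 ≤ w j) ∧ (∑ j, w j = 1) ∧
      (let ν : Measure ℝ := ∑ j : Fin n, ENNReal.ofReal (w j) • Measure.dirac (x j)
       IsProbabilityMeasure ν ∧
         ∀ i, 1 ≤ i → i ≤ p → ∫ t : ℝ, t ^ i ∂ν = ∫ t : ℝ, t ^ i ∂μ) := by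
  -- Indexing by `Fin (p + 1)` adds the harmless zeroth moment and avoids an index shift.
  have hpow (i : Fin (p + 1)) : Integrable (fun t : ℝ => t ^ (i : ℕ)) μ :=
    (hmom i (Nat.lt_succ_iff.1 i.isLt)).mono' (by fun_prop) (ae_of_all _ fun t => by simp)
  obtain ⟨n, w, x, hw0, hw1, hwx⟩ :=
    exists_convexCombination_eq_integral (Integrable.of_eval hpow)
  refine ⟨n, w, x, hw0, hw1, isProbabilityMeasure_sum_smul_dirac x hw0 hw1, fun i _ hip => ?_⟩
  have := congrFun hwx ⟨i, Nat.lt_succ_of_le hip⟩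
  rw [eval_integral hpow] at this
  simpa [integral_sum_smul_dirac x hw0] using this

/-- If `μ` is a probability measure on `ℝ` with finite moments of orders `1,…,p`, then
there is a probability measure which is a finite convex combination of Dirac masses
having the same first `p` moments as `μ`. -/
theorem exists_discrete_measure_same_moments
    (μ : Measure ℝ) [IsProbabilityMeasure μ] (p : ℕ) (hp : 1 ≤ p)
    (hmom : ∀ i ≤ p, Integrable (fun t : ℝ => |t| ^ i) μ) :
    ∃ (n : ℕ) (w : Fin n → ℝ) (x : Fin n → ℝ),
      (∀ j, 0 ≤ w j) ∧ (∑ j, w j = 1) ∧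
      (let ν : Measure ℝ := ∑ j : Fin n, ENNReal.ofReal (w j) • Measure.dirac (x j)
       IsProbabilityMeasure ν ∧
         ∀ i, 1 ≤ i → i ≤ p → ∫ t : ℝ, t ^ i ∂ν = ∫ t : ℝ, t ^ i ∂μ) :=
  exists_discrete_measure_same_moments_general μ p hmom
end

section
/- Let f be analytic on a domain containing Δ_{α,β} for every α > 0 and some β = β(α) > 0 (i.e., f ∈ ℋ), let p ≥ 0 be an integer, and suppose each derivative f^{(i)}, i = 0,...,p, has nontangential limit a_i at 0 (limit as z → 0 within each Δ_{α,β}). Then f admits the Taylor expansion f(z) = Σ_{i=0}^p (a_i/i!) z^i + o(z^p) nontangentially at 0. -/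
open Filter Set

lemma Delta.ne_zero' {α β : ℝ} {z : ℂ} (hz : z ∈ Delta α β) : z ≠ 0 := by
  rintro rfl
  simpa using hz.1

lemma Delta.mono' {α β β' : ℝ} (h : β ≤ β') : Delta α β ⊆ Delta α β' :=
  fun z hz => ⟨hz.1, hz.2.trans_le h⟩

lemma Delta.smul_mem' {α β : ℝ} {z : ℂ} (hz : z ∈ Delta α β) {t : ℝ}
    (ht0 : 0 < t) (ht1 : t ≤ 1) : (t : ℂ) * z ∈ Delta α β := by
  obtain ⟨h1, h2⟩ := hz
  constructor
  · have hre : ((t : ℂ) * z).re = t * z.re := by simp [Complex.mul_re]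
    have him : ((t : ℂ) * z).im = t * z.im := by simp [Complex.mul_im]
    rw [hre, him, abs_mul, abs_of_pos ht0]
    calc t * |z.re| < t * (-α * z.im) := mul_lt_mul_of_pos_left h1 ht0
      _ = -α * (t * z.im) := by ring
  · have habs : ‖((t : ℂ) * z)‖ = t * ‖z‖ := by
      rw [norm_mul, Complex.norm_real, Real.norm_eq_abs, abs_of_pos ht0]
    rw [habs]
    calc t * ‖z‖ ≤ 1 * ‖z‖ :=
          mul_le_mul_of_nonneg_right ht1 (norm_nonneg z)
      _ = ‖z‖ := one_mul _
      _ < β := h2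

lemma iteratedDerivWithin_of_isOpen' {f : ℂ → ℂ} {s : Set ℂ} (hs : IsOpen s) {x : ℂ}
    (hx : x ∈ s) (n : ℕ) : iteratedDerivWithin n f s x = iteratedDeriv n f x := by
  rw [iteratedDerivWithin_eq_iteratedFDerivWithin, iteratedDeriv_eq_iteratedFDeriv,
    iteratedFDerivWithin_of_isOpen n hs hx]

lemma taylor_key (p : ℕ) : ∀ (f : ℂ → ℂ) (a : ℕ → ℂ) (D : Set ℂ), IsOpen D →
    DifferentiableOn ℂ f D →
    (∀ i ≤ p, ∀ α > (0:ℝ), ∃ β > (0:ℝ), Delta α β ⊆ D ∧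
      Tendsto (iteratedDeriv i f) (nhdsWithin 0 (Delta α β)) (nhds (a i))) →
    ∀ α > (0:ℝ), ∃ β > (0:ℝ), Delta α β ⊆ D ∧
      Tendsto
        (fun z : ℂ => (f z - ∑ i ∈ Finset.range (p + 1), a i / (Nat.factorial i) * z ^ i) / z ^ p)
        (nhdsWithin 0 (Delta α β)) (nhds 0) := by
  induction p with
  | zero =>
    intro f a D hD hf hderiv α hα
    obtain ⟨β, hβ, hsub, ht⟩ := hderiv 0 le_rfl α hα
    rw [iteratedDeriv_zero] at ht
    refine ⟨β, hβ, hsub, ?_⟩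
    have h0 : (fun z : ℂ =>
        (f z - ∑ i ∈ Finset.range (0 + 1), a i / (Nat.factorial i) * z ^ i) / z ^ 0)
        = fun z : ℂ => f z - a 0 := by
      funext z; simp
    rw [h0]
    simpa using ht.sub_const (a 0)
  | succ p ih =>
    intro f a D hD hf hderiv α hα
    have hfa : AnalyticOnNhd ℂ f D := hf.analyticOnNhd hD
    have hg : DifferentiableOn ℂ (deriv f) D := hfa.deriv.differentiableOn
    have hgd : ∀ i ≤ p, ∀ α > (0:ℝ), ∃ β > (0:ℝ), Delta α β ⊆ D ∧
        Tendsto (iteratedDeriv i (deriv f)) (nhdsWithin 0 (Delta α β)) (nhds (a (i+1))) := by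
      intro i hi α' hα'
      obtain ⟨β, hβ, hsub, ht⟩ := hderiv (i+1) (by omega) α' hα'
      refine ⟨β, hβ, hsub, ?_⟩
      rwa [iteratedDeriv_succ'] at ht
    obtain ⟨β₁, hβ₁, hsub₁, ht₁⟩ := ih (deriv f) (fun i => a (i+1)) D hD hg hgd α hα
    obtain ⟨β₂, hβ₂, hsub₂, ht₂⟩ := hderiv 0 (by omega) α hα
    rw [iteratedDeriv_zero] at ht₂
    have hββ₁ : min β₁ β₂ ≤ β₁ := min_le_left _ _
    have hββ₂ : min β₁ β₂ ≤ β₂ := min_le_right _ _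
    refine ⟨min β₁ β₂, lt_min hβ₁ hβ₂, (Delta.mono' hββ₁).trans hsub₁, ?_⟩
    set Q : ℂ → ℂ :=
      fun w => deriv f w - ∑ i ∈ Finset.range (p + 1), a (i+1) / (Nat.factorial i) * w ^ i
      with hQdef
    set R : ℂ → ℂ :=
      fun w => f w - ∑ i ∈ Finset.range (p + 1 + 1), a i / (Nat.factorial i) * w ^ i with hRdef
    have ht₁' : Tendsto (fun z : ℂ => Q z / z ^ p) (nhdsWithin 0 (Delta α β₁)) (nhds 0) := ht₁
    -- derivative of R on D is Q
    have hRd : ∀ w ∈ D, HasDerivAt R (Q w) w := by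
      intro w hw
      have h1 : HasDerivAt f (deriv f w) w :=
        (hf.differentiableAt (hD.mem_nhds hw)).hasDerivAt
      have h2 : HasDerivAt
          (fun w : ℂ => ∑ i ∈ Finset.range (p + 1 + 1), a i / (Nat.factorial i) * w ^ i)
          (∑ i ∈ Finset.range (p + 1 + 1), a i / (Nat.factorial i) * (i * w ^ (i - 1))) w :=
        HasDerivAt.fun_sum fun i _ => (hasDerivAt_pow i w).const_mul _
      have h3 : (∑ i ∈ Finset.range (p + 1 + 1), a i / (Nat.factorial i) * (i * w ^ (i - 1)))
          = ∑ i ∈ Finset.range (p + 1), a (i+1) / (Nat.factorial i) * w ^ i := by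
        rw [Finset.sum_range_succ']
        simp only [Nat.cast_zero, zero_mul, mul_zero, add_zero]
        refine Finset.sum_congr rfl fun i _ => ?_
        have hfac : ((Nat.factorial (i+1) : ℂ)) = ((i:ℂ)+1) * (Nat.factorial i : ℂ) := by
          push_cast [Nat.factorial_succ]; ring
        have hfi : (Nat.factorial i : ℂ) ≠ 0 :=
          Nat.cast_ne_zero.mpr (Nat.factorial_ne_zero i)
        have hi1 : ((i:ℂ)+1) ≠ 0 := by
          have := Nat.cast_ne_zero (R := ℂ).mpr (Nat.succ_ne_zero i)
          push_cast at this
          exact this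
        rw [hfac]
        simp only [Nat.add_sub_cancel]
        push_cast
        field_simp
      rw [h3] at h2
      exact h1.sub h2
    -- main tendsto
    rw [NormedAddCommGroup.tendsto_nhds_zero]
    intro δ hδ
    have h1 : ∀ᶠ w in nhdsWithin 0 (Delta α β₁), ‖Q w / w ^ p‖ < δ/2 :=
      (NormedAddCommGroup.tendsto_nhds_zero.mp ht₁') (δ/2) (by linarith)
    obtain ⟨r, hr0, hrsub⟩ := Metric.mem_nhdsWithin_iff.mp h1
    have hQbound : ∀ w ∈ Delta α β₁, ‖w‖ < r →
        ‖Q w‖ ≤ δ/2 * ‖w‖ ^ p := by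
      intro w hw hwr
      have hw0 : w ≠ 0 := Delta.ne_zero' hw
      have hmem : w ∈ Metric.ball (0:ℂ) r ∩ Delta α β₁ := by
        refine ⟨?_, hw⟩
        simpa [Complex.dist_eq] using hwr
      have hlt : ‖Q w / w ^ p‖ < δ/2 := hrsub hmem
      have hwp : (‖w‖ : ℝ) ^ p ≠ 0 := pow_ne_zero _ (norm_ne_zero_iff.mpr hw0)
      have heq : ‖Q w‖ = ‖Q w / w ^ p‖ * ‖w‖ ^ p := by
        rw [norm_div, norm_pow,
          div_mul_cancel₀ _ hwp]
      rw [heq]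
      exact mul_le_mul_of_nonneg_right hlt.le (by positivity)
    -- choose neighbourhood
    filter_upwards [inter_mem
      (mem_nhdsWithin_of_mem_nhds (Metric.ball_mem_nhds (0:ℂ) hr0)) self_mem_nhdsWithin]
      with z hz
    obtain ⟨hzr, hzΔ⟩ := hz
    have hz0 : z ≠ 0 := Delta.ne_zero' hzΔ
    have hzr' : ‖z‖ < r := by simpa [Complex.dist_eq] using hzr
    have hzΔ₁ : ∀ t : ℝ, 0 < t → t ≤ 1 → ((t:ℂ) * z) ∈ Delta α β₁ :=
      fun t ht0 ht1 => Delta.mono' hββ₁ (Delta.smul_mem' hzΔ ht0 ht1)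
    have hzD : ∀ t : ℝ, 0 < t → t ≤ 1 → ((t:ℂ) * z) ∈ D :=
      fun t ht0 ht1 => hsub₁ (hzΔ₁ t ht0 ht1)
    set C : ℝ := δ/2 * ‖z‖ ^ p * ‖z‖ with hC
    have hCnn : 0 ≤ C := by positivity
    -- bound on the segment
    have hseg : ∀ t ∈ Set.Ioc (0:ℝ) 1, ‖Q ((t:ℂ) * z) * z‖ ≤ C := by
      intro t ht
      have hmem := hzΔ₁ t ht.1 ht.2
      have habs : ‖((t:ℂ) * z)‖ ≤ ‖z‖ := by
        rw [norm_mul, Complex.norm_real, Real.norm_eq_abs, abs_of_pos ht.1]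
        calc t * ‖z‖ ≤ 1 * ‖z‖ :=
              mul_le_mul_of_nonneg_right ht.2 (norm_nonneg z)
          _ = ‖z‖ := one_mul _
      have habsr : ‖((t:ℂ) * z)‖ < r := lt_of_le_of_lt habs hzr'
      have hb := hQbound _ hmem habsr
      rw [norm_mul]
      calc ‖Q ((t:ℂ) * z)‖ * ‖z‖
          ≤ (δ/2 * ‖((t:ℂ) * z)‖ ^ p) * ‖z‖ :=
            mul_le_mul_of_nonneg_right hb (norm_nonneg z)
        _ ≤ (δ/2 * ‖z‖ ^ p) * ‖z‖ := by
            have hple : ‖((t:ℂ) * z)‖ ^ p ≤ ‖z‖ ^ p :=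
              pow_le_pow_left₀ (norm_nonneg _) habs p
            have h2 : δ/2 * ‖((t:ℂ) * z)‖ ^ p ≤ δ/2 * ‖z‖ ^ p :=
              mul_le_mul_of_nonneg_left hple (by linarith)
            exact mul_le_mul_of_nonneg_right h2 (norm_nonneg z)
        _ = C := rfl
    -- FTC estimate
    have hbd : ∀ ε ∈ Set.Ioo (0:ℝ) 1, ‖R z - R ((ε:ℂ) * z)‖ ≤ C := by
      intro ε hε
      have hε1 : ε ≤ 1 := hε.2.le
      have hderivt : ∀ t ∈ Set.uIcc ε 1,
          HasDerivAt (fun t : ℝ => R ((t:ℂ) * z)) (Q ((t:ℂ)*z) * z) t := by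
        intro t ht
        rw [Set.uIcc_of_le hε1] at ht
        have ht0 : 0 < t := lt_of_lt_of_le hε.1 ht.1
        have hmem : ((t:ℂ) * z) ∈ D := hzD t ht0 ht.2
        have h1 : HasDerivAt (fun w : ℂ => R (w * z)) (Q ((t:ℂ)*z) * z) ((t:ℂ)) := by
          have := (hRd _ hmem).comp (t:ℂ) (hasDerivAt_mul_const z); exact this
        exact h1.comp_ofReal
      have hcont : ContinuousOn (fun t : ℝ => Q ((t:ℂ) * z) * z) (Set.uIcc ε 1) := by
        have hQc : ContinuousOn Q D := by
          refine (hg.continuousOn).sub (Continuous.continuousOn ?_)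
          exact continuous_finset_sum _ fun i _ => continuous_const.mul (continuous_pow i)
        have hmapc : ContinuousOn (fun t : ℝ => (t:ℂ) * z) (Set.uIcc ε 1) :=
          Continuous.continuousOn (by fun_prop)
        have hmaps : Set.MapsTo (fun t : ℝ => (t:ℂ) * z) (Set.uIcc ε 1) D := by
          intro t ht
          rw [Set.uIcc_of_le hε1] at ht
          exact hzD t (lt_of_lt_of_le hε.1 ht.1) ht.2
        exact (hQc.comp hmapc hmaps).mul continuousOn_const
      have hFTC := intervalIntegral.integral_eq_sub_of_hasDerivAt hderivt
        (hcont.intervalIntegrable)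
      have hnorm := intervalIntegral.norm_integral_le_of_norm_le_const
        (C := C) (f := fun t : ℝ => Q ((t:ℂ) * z) * z) (a := ε) (b := 1) (fun t ht => by
          apply hseg
          rw [Set.uIoc_of_le hε1] at ht
          exact ⟨lt_trans hε.1 ht.1, ht.2⟩)
      rw [hFTC] at hnorm
      have h1z : R (((1:ℝ):ℂ) * z) = R z := by norm_num
      rw [h1z] at hnorm
      calc ‖R z - R ((ε:ℂ)*z)‖ ≤ C * |1 - ε| := hnorm
        _ ≤ C * 1 := by
            have habs1 : |1 - ε| ≤ 1 := by
              rw [abs_of_nonneg (by linarith)]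
              linarith [hε.1]
            exact mul_le_mul_of_nonneg_left habs1 hCnn
        _ = C := mul_one C
    -- limit ε → 0⁺
    have hmap : Tendsto (fun ε : ℝ => ((ε:ℂ) * z)) (nhdsWithin 0 (Set.Ioi 0))
        (nhdsWithin 0 (Delta α β₂)) := by
      rw [tendsto_nhdsWithin_iff]
      constructor
      · have hc : Continuous (fun ε : ℝ => ((ε:ℂ) * z)) := by fun_prop
        have := hc.tendsto 0
        simp only [Complex.ofReal_zero, zero_mul] at this
        exact this.mono_left nhdsWithin_le_nhds
      · filter_upwards [Ioo_mem_nhdsGT_of_mem (Set.left_mem_Ico.mpr one_pos)] with ε hε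
        exact Delta.mono' hββ₂ (Delta.smul_mem' hzΔ hε.1 hε.2.le)
    have hpoly : Tendsto (fun ε : ℝ => ∑ i ∈ Finset.range (p+1+1),
        a i / (Nat.factorial i) * (((ε:ℝ):ℂ) * z) ^ i)
        (nhdsWithin 0 (Set.Ioi 0)) (nhds (a 0)) := by
      have hc : Continuous (fun ε : ℝ => ∑ i ∈ Finset.range (p+1+1),
          a i / (Nat.factorial i) * (((ε:ℝ):ℂ) * z) ^ i) := by
        refine continuous_finset_sum _ fun i _ => ?_
        fun_prop
      have hval : ∑ i ∈ Finset.range (p+1+1),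
          a i / (Nat.factorial i) * ((((0:ℝ)):ℂ) * z) ^ i = a 0 := by
        rw [Finset.sum_range_succ']
        simp
      have := hc.tendsto 0
      rw [hval] at this
      exact this.mono_left nhdsWithin_le_nhds
    have hRe : Tendsto (fun ε : ℝ => R ((ε:ℂ) * z)) (nhdsWithin 0 (Set.Ioi 0)) (nhds 0) := by
      have h := (ht₂.comp hmap).sub hpoly
      rw [sub_self] at h
      exact h
    have htt : Tendsto (fun ε : ℝ => ‖R z - R ((ε:ℂ) * z)‖) (nhdsWithin 0 (Set.Ioi 0))
        (nhds ‖R z‖) := by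
      have h := (tendsto_const_nhds (x := R z)
        (f := nhdsWithin (0:ℝ) (Set.Ioi 0))).sub hRe
      rw [sub_zero] at h
      exact h.norm
    have hRz : ‖R z‖ ≤ C :=
      le_of_tendsto htt (by
        filter_upwards [Ioo_mem_nhdsGT_of_mem (Set.left_mem_Ico.mpr one_pos)] with ε hε
        exact hbd ε hε)
    -- conclusion
    have hzpos : 0 < ‖z‖ := norm_pos_iff.mpr hz0
    show ‖R z / z ^ (p+1)‖ < δ
    calc ‖R z / z ^ (p+1)‖ = ‖R z‖ / (‖z‖ ^ p * ‖z‖) := by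
          rw [norm_div, norm_pow, pow_succ]
      _ ≤ δ/2 := by
          rw [div_le_iff₀ (by positivity)]
          calc ‖R z‖ ≤ C := hRz
            _ = δ/2 * (‖z‖ ^ p * ‖z‖) := by rw [hC]; ring
      _ < δ := by linarith

/-- Taylor formula in `ℋ`: if `f` is analytic on a domain `D` containing a cone
`Δ_{α,β(α)}` for each `α > 0`, and each derivative `f⁽ⁱ⁾`, `i = 0,…,p`, has
nontangential limit `aᵢ` at `0`, then `f(z) = ∑_{i=0}^p (aᵢ/i!) zⁱ + o(z^p)`
nontangentially at `0`. -/
theorem taylor_formula_in_H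
    (D : Set ℂ) (hD : IsOpen D) (f : ℂ → ℂ) (hf : DifferentiableOn ℂ f D)
    (hcone : ∀ α > (0:ℝ), ∃ β > (0:ℝ), Delta α β ⊆ D)
    (p : ℕ) (a : ℕ → ℂ)
    (hderiv : ∀ i ≤ p, ∀ α > (0:ℝ), ∃ β > (0:ℝ), Delta α β ⊆ D ∧
      Tendsto (iteratedDerivWithin i f D) (nhdsWithin 0 (Delta α β)) (nhds (a i))) :
    ∀ α > (0:ℝ), ∃ β > (0:ℝ), Delta α β ⊆ D ∧
      Tendsto
        (fun z : ℂ => (f z - ∑ i ∈ Finset.range (p + 1), a i / (Nat.factorial i) * z ^ i) / z ^ p)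
        (nhdsWithin 0 (Delta α β)) (nhds 0) := by
  have hderiv' : ∀ i ≤ p, ∀ α > (0:ℝ), ∃ β > (0:ℝ), Delta α β ⊆ D ∧
      Tendsto (iteratedDeriv i f) (nhdsWithin 0 (Delta α β)) (nhds (a i)) := by
    intro i hi α hα
    obtain ⟨β, hβ, hsub, ht⟩ := hderiv i hi α hα
    refine ⟨β, hβ, hsub, ht.congr' ?_⟩
    exact Filter.eventuallyEq_of_mem self_mem_nhdsWithin
      fun z hz => iteratedDerivWithin_of_isOpen' hD (hsub hz) i
  exact taylor_key p f a D hD hf hderiv'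
end

section
/- Let f ∈ ℋ satisfy f(z) = z + o(z) nontangentially at 0. Then for every α > 0 there exists β > 0 such that Δ_{2α,2β} is contained in the domain of f, and Δ_{α,β} ⊂ f(Δ_{2α,2β}). Moreover, for all ε ∈ (0,1), Δ_{α,β} \ Δ_{α,εβ} ⊂ f(Δ_{2α,2β} \ Δ_{2α,(ε/2)β}). -/
set_option maxHeartbeats 1000000


open Filter Set

lemma half_plane {α s a d xr xi zr zi : ℝ} (hα : 0 < α) (hs : 1 ≤ s)
    (ha0 : 0 < a) (hA : a ≤ s * (-xi)) (hB : 2 * (1 + 2 * α) * s * d ≤ α * a)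
    (hC : xr < -α * xi) (hd0 : 0 ≤ d) (hD : zr - xr ≤ d) (hE : zi - xi ≤ d) :
    zr + 2 * α * zi < 0 := by
  nlinarith [mul_le_mul_of_nonneg_left hD (by positivity : (0:ℝ) ≤ 2 * s),
    mul_le_mul_of_nonneg_left hE (by positivity : (0:ℝ) ≤ 4 * s * α),
    mul_le_mul_of_nonneg_left hA (le_of_lt hα),
    mul_lt_mul_of_pos_left hC (by positivity : (0:ℝ) < 2 * s),
    mul_nonneg (mul_nonneg (by positivity : (0:ℝ) ≤ 2 * α) (le_trans zero_le_one hs)) hd0]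

lemma cone_ball {α : ℝ} (hα : 0 < α) {ω z : ℂ} (hω : |ω.re| < -α * ω.im)
    (hz : ‖z - ω‖ ≤
      α / (2 * (1 + 2 * α) * Real.sqrt (1 + α ^ 2)) * ‖ω‖) :
    |z.re| < -(2 * α) * z.im := by
  set s := Real.sqrt (1 + α ^ 2) with hsdef
  have hs : 1 ≤ s := by
    nlinarith [Real.sq_sqrt (show (0:ℝ) ≤ 1 + α ^ 2 by positivity),
      Real.sqrt_nonneg (1 + α ^ 2), sq_nonneg α, sq_nonneg (Real.sqrt (1 + α ^ 2) - 1)]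
  have hs0 : 0 < s := lt_of_lt_of_le one_pos hs
  have hs2 : s ^ 2 = 1 + α ^ 2 := Real.sq_sqrt (by positivity)
  have him : ω.im < 0 := by
    nlinarith [abs_nonneg ω.re]
  have hω0 : ω ≠ 0 := fun h => by simp [h] at him
  set a := ‖ω‖ with hadef
  set d := ‖z - ω‖ with hddef
  have ha0 : 0 < a := by simpa [hadef] using (norm_pos_iff.mpr hω0)
  have hd0 : 0 ≤ d := norm_nonneg _
  have hsq : a ^ 2 = ω.re ^ 2 + ω.im ^ 2 := by
    rw [hadef, Complex.sq_norm, Complex.normSq_apply]; ring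
  have hre2 : ω.re ^ 2 ≤ α ^ 2 * ω.im ^ 2 := by
    nlinarith [sq_abs ω.re, abs_nonneg ω.re]
  have hA : a ≤ s * (-ω.im) := by
    nlinarith [mul_pos hs0 (neg_pos.mpr him), sq_nonneg (s * (-ω.im) - a),
      sq_nonneg (s * (-ω.im) + a)]
  have hB : 2 * (1 + 2 * α) * s * d ≤ α * a := by
    rw [div_mul_eq_mul_div, le_div_iff₀ (by positivity)] at hz
    nlinarith [hz]
  have hre : ω.re < -α * ω.im := lt_of_le_of_lt (le_abs_self _) hω
  have hre' : -ω.re < -α * ω.im := lt_of_le_of_lt (neg_le_abs _) hω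
  have h1 : |z.re - ω.re| ≤ d := by
    rw [hddef, ← Complex.sub_re]; exact Complex.abs_re_le_norm _
  have h2 : |z.im - ω.im| ≤ d := by
    rw [hddef, ← Complex.sub_im]; exact Complex.abs_im_le_norm _
  have P1 : z.re + 2 * α * z.im < 0 :=
    half_plane hα hs ha0 hA hB hre hd0 (le_trans (le_abs_self _) h1)
      (le_trans (le_abs_self _) h2)
  have P2 : -z.re + 2 * α * z.im < 0 :=
    half_plane (xr := -ω.re) (zr := -z.re) hα hs ha0 hA hB hre' hd0
      (by rw [show -z.re - -ω.re = -(z.re - ω.re) by ring]; exact le_trans (neg_le_abs _) h1)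
      (le_trans (le_abs_self _) h2)
  rw [abs_lt]
  constructor <;> nlinarith

/-- If `f ∈ ℋ` satisfies `f(z) = z + o(z)` nontangentially at `0`, then for every `α > 0`
there is `β > 0` with `Δ_{2α,2β}` in the domain of `f`, `Δ_{α,β} ⊆ f(Δ_{2α,2β})`, and more
precisely `Δ_{α,β} \ Δ_{α,εβ} ⊆ f(Δ_{2α,2β} \ Δ_{2α,(ε/2)β})` for all `ε ∈ (0,1)`. -/
theorem image_contains_cone
    (D : Set ℂ) (hD : IsOpen D) (f : ℂ → ℂ) (hf : DifferentiableOn ℂ f D)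
    (hcone : ∀ α > (0:ℝ), ∃ β > (0:ℝ), Delta α β ⊆ D)
    (hexp : ∀ α > (0:ℝ), ∃ β > (0:ℝ), Delta α β ⊆ D ∧
      Tendsto (fun z : ℂ => (f z - z) / z) (nhdsWithin 0 (Delta α β)) (nhds 0)) :
    ∀ α > (0:ℝ), ∃ β > (0:ℝ),
      Delta (2 * α) (2 * β) ⊆ D ∧
      Delta α β ⊆ f '' Delta (2 * α) (2 * β) ∧
      ∀ ε : ℝ, 0 < ε → ε < 1 →
        Delta α β \ Delta α (ε * β) ⊆ f '' (Delta (2 * α) (2 * β) \ Delta (2 * α) (ε / 2 * β)) := by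
  intro α hα
  obtain ⟨β₀, hβ₀, hsub₀, htend⟩ := hexp (2 * α) (by linarith)
  set c₂ := α / (2 * (1 + 2 * α) * Real.sqrt (1 + α ^ 2)) with hc₂def
  have hsqrt0 : 0 < Real.sqrt (1 + α ^ 2) := Real.sqrt_pos.mpr (by positivity)
  have hc₂0 : 0 < c₂ := by rw [hc₂def]; positivity
  set c := min (c₂ / 2) (1 / 8) with hcdef
  have hc0 : 0 < c := lt_min (by positivity) (by norm_num)
  have hc8 : c ≤ 1 / 8 := min_le_right _ _
  have h2c : 2 * c ≤ c₂ := by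
    have := min_le_left (c₂ / 2) (1 / 8 : ℝ); rw [hcdef]; linarith
  set δ := c / 20 with hδdef
  have hδ0 : 0 < δ := by positivity
  rw [Metric.tendsto_nhdsWithin_nhds] at htend
  obtain ⟨β₁, hβ₁0, hsmall⟩ := htend δ hδ0
  set β := min β₀ β₁ / 2 with hβdef
  have hβpos : 0 < β := by rw [hβdef]; positivity
  have h2β : 2 * β ≤ β₀ := by
    have := min_le_left β₀ β₁; rw [hβdef]; linarith
  have h2β' : 2 * β ≤ β₁ := by
    have := min_le_right β₀ β₁; rw [hβdef]; linarith
  -- the o(z) estimate in usable form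
  have hest : ∀ z ∈ Delta (2 * α) β₀, ‖z‖ < β₁ → ‖f z - z‖ ≤ δ * ‖z‖ := by
    intro z hz hzb
    have hz0 : z ≠ 0 := by
      intro h; rw [h] at hz; simp [Delta] at hz
    have h1 := hsmall hz (by simpa [Complex.dist_eq] using hzb)
    rw [dist_zero_right, norm_div] at h1
    have hzpos : 0 < ‖z‖ := norm_pos_iff.mpr hz0
    rw [div_lt_iff₀ hzpos] at h1
    linarith
  -- the key solvability statement
  have key : ∀ ω : ℂ, |ω.re| < -α * ω.im → ‖ω‖ < β →
      ∃ z, f z = ω ∧ ‖z - ω‖ ≤ c * ‖ω‖ := by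
    intro ω hωcone hωβ
    set a := ‖ω‖ with hadef
    have him : ω.im < 0 := by nlinarith [abs_nonneg ω.re]
    have hω0 : ω ≠ 0 := fun h => by simp [h] at him
    have ha0 : 0 < a := by simpa [hadef] using (norm_pos_iff.mpr hω0)
    have hball : ∀ z : ℂ, ‖z - ω‖ ≤ 2 * c * a →
        z ∈ Delta (2 * α) β₀ ∧ ‖z‖ < β₁ ∧ ‖z‖ ≤ 2 * a := by
      intro z hz
      have hcone2 : |z.re| < -(2 * α) * z.im :=
        cone_ball hα hωcone (le_trans hz (by nlinarith))
      have habs : ‖z‖ ≤ a + 2 * c * a := by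
        have h := norm_add_le ω (z - ω)
        simp only [add_sub_cancel] at h
        linarith
      have hlt : ‖z‖ < 2 * β := by nlinarith
      exact ⟨⟨hcone2, lt_of_lt_of_le hlt h2β⟩, lt_of_lt_of_le hlt h2β', by nlinarith⟩
    have hH : ∀ z : ℂ, ‖z - ω‖ ≤ 2 * c * a → ‖f z - z‖ ≤ 2 * δ * a := by
      intro z hz
      obtain ⟨hz1, hz2, hz3⟩ := hball z hz
      have h := hest z hz1 hz2
      nlinarith [norm_nonneg z]
    have hmemD : ∀ z : ℂ, ‖z - ω‖ ≤ 2 * c * a → z ∈ D :=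
      fun z hz => hsub₀ (hball z hz).1
    set h := fun z : ℂ => f z - z with hhdef
    set r := c * a with hrdef
    have hr0 : 0 < r := by positivity
    have hr2 : r ≤ 2 * c * a := by rw [hrdef]; nlinarith
    have hderiv : ∀ w ∈ Metric.closedBall ω r, ‖deriv h w‖ ≤ 1 / 4 := by
      intro w hw
      rw [Metric.mem_closedBall, Complex.dist_eq] at hw
      have hsubball : ∀ ζ ∈ Metric.ball w r, ‖ζ - ω‖ ≤ 2 * c * a := by
        intro ζ hζ
        rw [Metric.mem_ball, Complex.dist_eq] at hζ
        have htri : ‖ζ - ω‖ ≤ ‖ζ - w‖ + ‖w - ω‖ :=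
          norm_sub_le_norm_sub_add_norm_sub ζ w ω
        rw [hrdef] at hζ hw; nlinarith
      have hd : DifferentiableOn ℂ h (Metric.ball w r) :=
        (hf.mono fun ζ hζ => hmemD ζ (hsubball ζ hζ)).sub differentiableOn_id
      have hmaps : MapsTo h (Metric.ball w r) (Metric.ball (h w) (5 * δ * a)) := by
        intro ζ hζ
        rw [Metric.mem_ball, dist_eq_norm]
        have e1 : ‖h ζ‖ ≤ 2 * δ * a := hH ζ (hsubball ζ hζ)
        have e2 : ‖h w‖ ≤ 2 * δ * a := hH w (le_trans hw hr2)
        have := norm_sub_le (h ζ) (h w)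
        nlinarith
      have hS := Complex.norm_deriv_le_div_of_mapsTo_ball hd (hmaps.mono_right Metric.ball_subset_closedBall) hr0
      have heq : 5 * δ * a / r = 1 / 4 := by
        rw [hrdef, hδdef]
        field_simp
        ring
      rw [heq] at hS
      exact hS
    set T := fun z : ℂ => z + (ω - f z) with hTdef
    have hTmaps : MapsTo T (Metric.closedBall ω r) (Metric.closedBall ω r) := by
      intro z hz
      rw [Metric.mem_closedBall, Complex.dist_eq] at hz ⊢
      have hTz : T z - ω = -(f z - z) := by rw [hTdef]; ring
      rw [hTz]
      have hhz : ‖f z - z‖ ≤ 2 * δ * a := hH z (le_trans hz hr2)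
      rw [norm_neg]
      rw [hrdef]; rw [hδdef] at hhz; nlinarith
    have hlip : LipschitzOnWith (1 / 2 : NNReal) T (Metric.closedBall ω r) := by
      apply LipschitzOnWith.of_dist_le_mul
      intro x hx y hy
      have hmean : ‖h x - h y‖ ≤ (1 / 4) * ‖x - y‖ := by
        apply Convex.norm_image_sub_le_of_norm_deriv_le
          (fun w hw => ?_) hderiv (convex_closedBall ω r) hy hx
        have hwD : w ∈ D := by
          rw [Metric.mem_closedBall, Complex.dist_eq] at hw
          exact hmemD w (le_trans hw hr2)
        exact (hf.differentiableAt (hD.mem_nhds hwD)).sub differentiableAt_id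
      have hTxy : T x - T y = -(h x - h y) := by rw [hTdef, hhdef]; ring
      rw [dist_eq_norm, hTxy, norm_neg, dist_eq_norm]
      calc ‖h x - h y‖ ≤ (1 / 4) * ‖x - y‖ := hmean
        _ ≤ ((1 / 2 : NNReal) : ℝ) * ‖x - y‖ := by
            have : (0:ℝ) ≤ ‖x - y‖ := norm_nonneg _
            push_cast; linarith
    have hcomplete : IsComplete (Metric.closedBall ω r) :=
      Metric.isClosed_closedBall.isComplete
    have hcontr : ContractingWith (1 / 2 : NNReal) (hTmaps.restrict T _ _) :=
      ⟨by rw [← NNReal.coe_lt_coe]; norm_num, hlip.mapsToRestrict hTmaps⟩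
    have hωmem : ω ∈ Metric.closedBall ω r := Metric.mem_closedBall_self (le_of_lt hr0)
    refine ⟨ContractingWith.efixedPoint' T hcomplete hTmaps hcontr ω hωmem (edist_ne_top _ _),
      ?_, ?_⟩
    · have hfix := ContractingWith.efixedPoint_isFixedPt' hcomplete hTmaps hcontr hωmem
        (edist_ne_top _ _)
      have hx : _ + (ω - f _) = _ := hfix
      have := add_eq_left.mp hx
      have := sub_eq_zero.mp this
      exact this.symm
    · have hmem := ContractingWith.efixedPoint_mem' hcomplete hTmaps hcontr hωmem
        (edist_ne_top _ _)
      rw [Metric.mem_closedBall, Complex.dist_eq] at hmem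
      exact hmem
  -- now the three conclusions
  refine ⟨β, hβpos, ?_, ?_, ?_⟩
  · intro z hz
    exact hsub₀ ⟨hz.1, lt_of_lt_of_le hz.2 h2β⟩
  · rintro ω ⟨hω1, hω2⟩
    obtain ⟨z, hfz, hzb⟩ := key ω hω1 hω2
    set a := ‖ω‖ with hadef
    have ha0 : 0 ≤ a := norm_nonneg _
    have hcone2 : |z.re| < -(2 * α) * z.im :=
      cone_ball hα hω1 (le_trans hzb (by nlinarith))
    have habs : ‖z‖ < 2 * β := by
      have h := norm_add_le ω (z - ω)
      simp only [add_sub_cancel] at h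
      nlinarith
    exact ⟨z, ⟨hcone2, habs⟩, hfz⟩
  · intro ε hε0 hε1
    rintro ω ⟨⟨hω1, hω2⟩, hωout⟩
    obtain ⟨z, hfz, hzb⟩ := key ω hω1 hω2
    set a := ‖ω‖ with hadef
    have ha0 : 0 ≤ a := norm_nonneg _
    have halow : ε * β ≤ a := by
      by_contra hcon
      exact hωout ⟨hω1, by push_neg at hcon; exact hcon⟩
    have hcone2 : |z.re| < -(2 * α) * z.im :=
      cone_ball hα hω1 (le_trans hzb (by nlinarith))
    have habs : ‖z‖ < 2 * β := by
      have h := norm_add_le ω (z - ω)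
      simp only [add_sub_cancel] at h
      nlinarith
    have hlow : ε / 2 * β ≤ ‖z‖ := by
      have h2 : ‖ω‖ ≤ ‖z‖ + ‖ω - z‖ := by
        simpa using norm_add_le z (ω - z)
      have hsym : ‖ω - z‖ = ‖z - ω‖ := by
        rw [← neg_sub, norm_neg]
      rw [hsym] at h2
      nlinarith [norm_nonneg z]
    refine ⟨z, ⟨⟨hcone2, habs⟩, fun hmem => ?_⟩, hfz⟩
    exact absurd hmem.2 (not_lt.mpr hlow)
end
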